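/- arXiv:2303.13380 — 6 statements merged into one kernel-verified Lean document; each statement's English description precedes it below -/
import Mathlib

section
/- Suppose H is a non-empty bipartite graph with parts X, Y in which for every edge xy ∈ E(H) (with x ∈ X, y ∈ Y), the vertex y has at least 2t neighbors z ∈ X such that x and z have at least 2t common neighbors in H. Then H contains P_t □ K₂ as a subgraph. -/
open SimpleGraph

/-- `F` has an (injective) copy in `G`. -/
def Contains {W V : Type*} (F : SimpleGraph W) (G : SimpleGraph V) : Prop :=
  ∃ f : W → V, Function.Injective f ∧ ∀ a b, F.Adj a b → G.Adj (f a) (f b)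

/-- The ladder `P_t □ K₂`. -/
def ladder (t : ℕ) : SimpleGraph (Fin t × Fin 2) :=
  pathGraph t □ (⊤ : SimpleGraph (Fin 2))

/-- Number of common neighbours of `u` and `v` in `G`. -/
noncomputable def codeg {V : Type*} (G : SimpleGraph V) (u v : V) : ℕ :=
  (G.neighborSet u ∩ G.neighborSet v).ncard

/-!
The ladder is built greedily, one rung at a time. Orient the last rung as `xy` with `x ∈ X`,
`y ∈ Y`; while fewer than `t` rungs are built, at most `2t - 2` vertices are used. Among the
at least `2t` neighbours `z` of `y` with `d(x, z) ≥ 2t` one is unused, and among the at least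
`2t` common neighbours of `x` and `z` one, `w`, is unused and distinct from `z`. Then `wz` is
the next rung, with `w` continuing the rail of `x` and `z` that of `y`.
-/

open Finset

section

variable {V : Type*}

structure IsLadderPrefix (G : SimpleGraph V) (f : ℕ × Fin 2 → V) (n : ℕ) : Prop where
  injOn : Set.InjOn f {p | p.1 < n}
  rung : ∀ i < n, G.Adj (f (i, 0)) (f (i, 1))
  rail : ∀ i c, i + 1 < n → G.Adj (f (i, c)) (f (i + 1, c))

namespace IsLadderPrefix

variable {G : SimpleGraph V} {f : ℕ × Fin 2 → V} {n : ℕ}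

lemma of_adj {u v : V} (huv : G.Adj u v) : IsLadderPrefix G (fun p ↦ ![u, v] p.2) 1 where
  injOn := by
    rintro ⟨i, c⟩ hi ⟨j, d⟩ hj hcd
    simp only [Set.mem_ofPred_eq, Nat.lt_one_iff] at hi hj
    subst hi hj
    fin_cases c <;> fin_cases d <;> simp_all [huv.ne, huv.ne.symm]
  rung _ _ := huv
  rail _ _ h := by omega

lemma extend (hf : IsLadderPrefix G f (n + 1)) {u v : V} (hu : G.Adj (f (n, 0)) u)
    (hv : G.Adj (f (n, 1)) v) (huv : G.Adj u v) (hu_new : u ∉ f '' {p | p.1 < n + 1})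
    (hv_new : v ∉ f '' {p | p.1 < n + 1}) :
    IsLadderPrefix G (fun p ↦ if p.1 = n + 1 then ![u, v] p.2 else f p) (n + 2) where
  injOn := by
    rintro ⟨i, c⟩ hi ⟨j, d⟩ hj hcd
    simp only [Set.mem_ofPred_eq] at hi hj
    have hnew {p : ℕ × Fin 2} (hp : p.1 < n + 1) : f p ≠ u ∧ f p ≠ v :=
      ⟨fun h ↦ hu_new ⟨p, hp, h⟩, fun h ↦ hv_new ⟨p, hp, h⟩⟩
    by_cases hin : i = n + 1 <;> by_cases hjn : j = n + 1
    · subst hin hjn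
      fin_cases c <;> fin_cases d <;> simp_all [huv.ne, huv.ne.symm]
    · have := hnew (p := (j, d)) (by omega)
      fin_cases c <;> simp_all [eq_comm]
    · have := hnew (p := (i, c)) (by omega)
      fin_cases d <;> simp_all
    · simp only [hin, hjn, if_false] at hcd
      exact hf.injOn (show i < n + 1 by omega) (show j < n + 1 by omega) hcd
  rung i hi := by
    by_cases hin : i = n + 1
    · simpa [hin] using huv
    · simpa [hin] using hf.rung i (by omega)
  rail i c hi := by
    by_cases hin : i = n
    · subst hin
      fin_cases c
      · simpa using hu
      · simpa using hv
    · simpa [show i ≠ n + 1 by omega, hin] using hf.rail i c (by omega)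

lemma contains_ladder (hf : IsLadderPrefix G f n) : Contains (ladder n) G := by
  refine ⟨fun p ↦ f (p.1, p.2), ?_, ?_⟩
  · rintro ⟨i, c⟩ ⟨j, d⟩ h
    have := hf.injOn (by simp) (by simp) h
    simp_all [Prod.ext_iff, Fin.ext_iff]
  · rintro ⟨i, c⟩ ⟨j, d⟩ hadj
    rcases boxProd_adj.mp hadj with ⟨hij, hcd⟩ | ⟨hcd, hij⟩
    · obtain rfl : c = d := hcd
      rcases pathGraph_adj.mp hij with hij | hij <;> dsimp only at hij
      · simpa [← hij] using hf.rail i c (by omega)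
      · simpa [← hij] using (hf.rail j c (by omega)).symm
    · obtain rfl : i = j := hij
      have := hf.rung i i.2
      fin_cases c <;> fin_cases d <;> simp_all [this.symm]

end IsLadderPrefix

theorem contains_ladder_of_forall_adj_exists_rung {G : SimpleGraph V} {t : ℕ}
    (hne : G.edgeSet.Nonempty)
    (hrung : ∀ u v, G.Adj u v → ∀ S : Finset V, #S + 2 ≤ 2 * t →
      ∃ u' v', G.Adj u u' ∧ G.Adj v v' ∧ G.Adj u' v' ∧ u' ∉ S ∧ v' ∉ S) :
    Contains (ladder t) G := by
  classical
  obtain ⟨⟨u, v⟩, huv⟩ := hne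
  have exists_prefix : ∀ n, n + 1 ≤ t → ∃ f, IsLadderPrefix G f (n + 1) := by
    intro n
    induction n with
    | zero => exact fun _ ↦ ⟨_, .of_adj huv⟩
    | succ n ih =>
      intro hn
      obtain ⟨f, hf⟩ := ih (by omega)
      have hS : #((range (n + 1) ×ˢ univ).image f) + 2 ≤ 2 * t :=
        calc _ ≤ #(range (n + 1) ×ˢ (univ : Finset (Fin 2))) + 2 := by grw [card_image_le]
          _ ≤ 2 * t := by simp only [card_product, card_range, card_univ, Fintype.card_fin]; omega
      obtain ⟨u', v', hu, hv, huv', hu', hv'⟩ := hrung _ _ (hf.rung n (by omega)) _ hS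
      exact ⟨_, hf.extend hu hv huv' (by simpa using hu') (by simpa using hv')⟩
  rcases t with _ | t
  · exact ⟨fun p ↦ p.1.elim0, fun p ↦ p.1.elim0, fun p ↦ p.1.elim0⟩
  · obtain ⟨f, hf⟩ := exists_prefix t le_rfl
    exact hf.contains_ladder

section Bipartite

variable {H : SimpleGraph V} {X Y : Set V} {t : ℕ}

lemma exists_rung_of_mem_left
    (h : ∀ x ∈ X, ∀ y ∈ Y, H.Adj x y →
      2 * t ≤ {z | z ∈ X ∧ H.Adj y z ∧ 2 * t ≤ codeg H x z}.ncard)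
    {x y : V} (hx : x ∈ X) (hy : y ∈ Y) (hxy : H.Adj x y) (S : Finset V)
    (hS : #S + 2 ≤ 2 * t) :
    ∃ w z, H.Adj x w ∧ H.Adj y z ∧ H.Adj w z ∧ w ∉ S ∧ z ∉ S := by
  classical
  obtain ⟨z, ⟨-, hyz, hxz⟩, hzS⟩ := Set.exists_mem_notMem_of_ncard_lt_ncard
    (s := (S : Set V)) (t := {z | z ∈ X ∧ H.Adj y z ∧ 2 * t ≤ codeg H x z})
    (by rw [Set.ncard_coe_finset]; linarith [h x hx y hy hxy])
  obtain ⟨w, ⟨hxw, hzw⟩, hwS⟩ := Set.exists_mem_notMem_of_ncard_lt_ncard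
    (s := ((insert z S : Finset V) : Set V)) (t := H.neighborSet x ∩ H.neighborSet z)
    (by rw [Set.ncard_coe_finset]; have := card_insert_le z S; unfold codeg at hxz; omega)
  exact ⟨w, z, hxw, hyz, hzw.symm, fun hw ↦ hwS (by simp [hw]), hzS⟩

lemma exists_rung
    (hbip : ∀ a b, H.Adj a b → (a ∈ X ∧ b ∈ Y) ∨ (a ∈ Y ∧ b ∈ X))
    (h : ∀ x ∈ X, ∀ y ∈ Y, H.Adj x y →
      2 * t ≤ {z | z ∈ X ∧ H.Adj y z ∧ 2 * t ≤ codeg H x z}.ncard)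
    {u v : V} (huv : H.Adj u v) (S : Finset V) (hS : #S + 2 ≤ 2 * t) :
    ∃ u' v', H.Adj u u' ∧ H.Adj v v' ∧ H.Adj u' v' ∧ u' ∉ S ∧ v' ∉ S := by
  rcases hbip u v huv with ⟨hu, hv⟩ | ⟨hu, hv⟩
  · exact exists_rung_of_mem_left h hu hv huv S hS
  · obtain ⟨w, z, hvw, huz, hwz, hw, hz⟩ := exists_rung_of_mem_left h hv hu huv.symm S hS
    exact ⟨z, w, huz, hvw, hwz.symm, hz, hw⟩

end Bipartite

end

theorem ladder_of_many_high_codegree_neighbours_general {V : Type*} (t : ℕ)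
    (H : SimpleGraph V) (X Y : Set V)
    (hbip : ∀ a b, H.Adj a b → (a ∈ X ∧ b ∈ Y) ∨ (a ∈ Y ∧ b ∈ X))
    (hne : H.edgeSet.Nonempty)
    (h : ∀ x ∈ X, ∀ y ∈ Y, H.Adj x y →
      2 * t ≤ {z | z ∈ X ∧ H.Adj y z ∧ 2 * t ≤ codeg H x z}.ncard) :
    Contains (ladder t) H :=
  contains_ladder_of_forall_adj_exists_rung hne fun _ _ huv ↦ exists_rung hbip h huv

/-- If `H` is a non-empty bipartite graph with parts `X, Y` such that for every edge `xy`
(`x ∈ X`, `y ∈ Y`) the vertex `y` has at least `2t` neighbours `z ∈ X` with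
`d(x,z) ≥ 2t`, then `H` contains `P_t □ K₂` as a subgraph. -/
theorem ladder_of_many_high_codegree_neighbours {V : Type*} [Fintype V] (t : ℕ)
    (H : SimpleGraph V) (X Y : Set V) (hdisj : Disjoint X Y)
    (hbip : ∀ a b, H.Adj a b → (a ∈ X ∧ b ∈ Y) ∨ (a ∈ Y ∧ b ∈ X))
    (hne : H.edgeSet.Nonempty)
    (h : ∀ x ∈ X, ∀ y ∈ Y, H.Adj x y →
      2 * t ≤ {z | z ∈ X ∧ H.Adj y z ∧ 2 * t ≤ codeg H x z}.ncard) :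
    Contains (ladder t) H :=
  ladder_of_many_high_codegree_neighbours_general t H X Y hbip hne h
end

section
/- Let α ≥ t² and let 𝒫 be a non-empty α-rich collection of paths on 2t−1 vertices (i.e., of length 2t−2) in a graph G. Then G contains the t × t grid F_{t,t} as a subgraph. -/
open SimpleGraph

/-- The `t × t` grid `F_{t,t}`. -/
def gridGraph (t : ℕ) : SimpleGraph (Fin t × Fin t) :=
  pathGraph t □ pathGraph t

/-- `p : Fin m → V` is a (labelled) path on `m` vertices in `G`. -/
def IsPathIn {V : Type*} (G : SimpleGraph V) {m : ℕ} (p : Fin m → V) : Prop :=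
  Function.Injective p ∧ ∀ i : ℕ, (h : i + 1 < m) → G.Adj (p ⟨i, by omega⟩) (p ⟨i + 1, h⟩)

private lemma arith1 (t a r : ℕ) (h : a + 1 ≤ t) (hr : r ≤ t - 1) :
    a * t + r ≤ t ^ 2 - 1 := by
  rw [pow_two]
  have h1 : a * t + t ≤ t * t := by
    calc a * t + t = (a+1) * t := by ring
    _ ≤ t * t := Nat.mul_le_mul_right t h
  omega

private lemma arith2 (t a r : ℕ) (ht : 2 ≤ t) (h : a + 2 ≤ t) (hr : r ≤ t) :
    a * t + r ≤ t ^ 2 - 1 := by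
  rw [pow_two]
  have h1 : a * t + 2*t ≤ t * t := by
    calc a * t + 2*t = (a+2) * t := by ring
    _ ≤ t * t := Nat.mul_le_mul_right t h
  omega

/-- Invariant after having constructed rows `0,…,i` of the grid. -/
def GridOuter {V : Type*} (G : SimpleGraph V) (t : ℕ) (Ps : Set (Fin (2*t-1) → V)) (z : V)
    (i : ℕ) (φ : ℕ → ℕ → V) (P : Fin (2*t-1) → V) : Prop :=
  P ∈ Ps ∧
  (∀ j, j < t → ∀ h : i + j < 2*t-1, P ⟨i+j, h⟩ = φ i j) ∧
  (∀ h : 2*t-2 < 2*t-1, P ⟨2*t-2, h⟩ = z) ∧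
  (∀ i' j, i' ≤ i → j < t → (φ i' j = z ↔ (i' = t-1 ∧ j = t-1))) ∧
  (∀ i₁ j₁ i₂ j₂, i₁ ≤ i → i₂ ≤ i → j₁ < t → j₂ < t → ¬(i₁ = i₂ ∧ j₁ = j₂) →
      φ i₁ j₁ ≠ φ i₂ j₂) ∧
  (∀ i' j, i' ≤ i → j + 1 < t → G.Adj (φ i' j) (φ i' (j+1))) ∧
  (∀ i' j, i' < i → j < t → G.Adj (φ i' j) (φ (i'+1) j))

/-- Invariant while constructing row `i+1`: columns `j,…,t-1` already chosen. -/
def GridInner {V : Type*} (G : SimpleGraph V) (t : ℕ) (Ps : Set (Fin (2*t-1) → V)) (z : V)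
    (i : ℕ) (φ : ℕ → ℕ → V) (P : Fin (2*t-1) → V) (j : ℕ) (ψ : ℕ → V)
    (Q : Fin (2*t-1) → V) : Prop :=
  Q ∈ Ps ∧
  (∀ s, ∀ h : s < 2*t-1, s ≤ i + j → Q ⟨s, h⟩ = P ⟨s, h⟩) ∧
  (∀ k, j ≤ k → k < t → ∀ h : i+1+k < 2*t-1, Q ⟨i+1+k, h⟩ = ψ k) ∧
  (∀ h : 2*t-2 < 2*t-1, Q ⟨2*t-2, h⟩ = z) ∧
  (∀ k, j ≤ k → k < t →
     (∀ i' j', i' ≤ i → j' < t → ψ k ≠ φ i' j') ∧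
     (∀ k', k < k' → k' < t → ψ k ≠ ψ k') ∧
     (ψ k = z ↔ (i+1 = t-1 ∧ k = t-1))) ∧
  (∀ k, j ≤ k → k < t → G.Adj (φ i k) (ψ k))

/-- Let `α ≥ t²` and let `Ps` be a non-empty `α`-rich collection of paths on `2t-1`
vertices in `G`.  Then `G` contains the `t × t` grid as a subgraph. -/
theorem grid_of_rich_paths {V : Type*} [Fintype V] [DecidableEq V] (t α : ℕ)
    (ht : 0 < t) (hα : t ^ 2 ≤ α) (G : SimpleGraph V)
    (Ps : Set (Fin (2 * t - 1) → V)) (hne : Ps.Nonempty)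
    (hpath : ∀ p ∈ Ps, IsPathIn G p)
    (hrich : ∀ p ∈ Ps, ∀ i : Fin (2 * t - 1), 1 ≤ i.val → i.val + 1 < 2 * t - 1 →
      α ≤ {v | Function.update p i v ∈ Ps}.ncard) :
    Contains (gridGraph t) G := by
  classical
  obtain ⟨P₀, hP₀⟩ := hne
  rcases eq_or_lt_of_le (show 1 ≤ t from ht) with h1 | ht2
  · -- t = 1
    subst h1
    refine ⟨fun _ => P₀ ⟨0, by omega⟩, fun a b _ => Subsingleton.elim a b, ?_⟩
    intro a b hab
    exfalso
    rw [gridGraph, boxProd_adj] at hab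
    rcases hab with ⟨h, _⟩ | ⟨h, _⟩ <;> exact h.ne (Subsingleton.elim _ _)
  -- t ≥ 2
  set z : V := P₀ ⟨2*t-2, by omega⟩ with hzdef
  -- the selection lemma
  have pick : ∀ (p : Fin (2*t-1) → V), p ∈ Ps → ∀ (s : ℕ), 1 ≤ s → ∀ hs2 : s + 1 < 2*t-1,
      ∀ A : Finset V, A.card ≤ t^2 - 1 →
      ∃ v, v ∉ A ∧ Function.update p ⟨s, by omega⟩ v ∈ Ps := by
    intro p hp s hs1 hs2 A hA
    by_contra hcon
    push_neg at hcon
    have hsub : {v | Function.update p ⟨s, by omega⟩ v ∈ Ps} ⊆ (A : Set V) := by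
      intro v hv
      by_contra hvA
      exact hcon v hvA hv
    have h1 := hrich p hp ⟨s, by omega⟩ hs1 hs2
    have h2 := Set.ncard_le_ncard hsub A.finite_toSet
    rw [Set.ncard_coe_finset] at h2
    have h3 : 0 < t^2 := pow_pos ht 2
    omega
  have upd_eq : ∀ (p : Fin (2*t-1) → V) (s s' : ℕ) (h : s < 2*t-1) (h' : s' < 2*t-1)
      (v : V), s = s' → Function.update p ⟨s', h'⟩ v ⟨s, h⟩ = v := by
    intro p s s' h h' v he
    have e : (⟨s, h⟩ : Fin (2*t-1)) = ⟨s', h'⟩ := Fin.ext he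
    rw [e, Function.update_self]
  have upd_ne : ∀ (p : Fin (2*t-1) → V) (s s' : ℕ) (h : s < 2*t-1) (h' : s' < 2*t-1)
      (v : V), s ≠ s' → Function.update p ⟨s', h'⟩ v ⟨s, h⟩ = p ⟨s, h⟩ := by
    intro p s s' h h' v hne
    apply Function.update_of_ne
    simp only [ne_eq, Fin.mk.injEq]
    exact hne
  have adjQ : ∀ (Q : Fin (2*t-1) → V), Q ∈ Ps → ∀ (s s' : ℕ) (h : s < 2*t-1)
      (h' : s' < 2*t-1), s + 1 = s' → G.Adj (Q ⟨s,h⟩) (Q ⟨s',h'⟩) := by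
    intro Q hQ s s' h h' he
    have e : (⟨s', h'⟩ : Fin (2*t-1)) = ⟨s+1, by omega⟩ := Fin.ext (show s' = s + 1 by omega)
    rw [e]
    exact (hpath Q hQ).2 s (by omega)
  have hP₀inj : ∀ (c d : ℕ) (hc : c < 2*t-1) (hd : d < 2*t-1),
      P₀ ⟨c,hc⟩ = P₀ ⟨d,hd⟩ → c = d := by
    intro c d hc hd h
    have := (hpath P₀ hP₀).1 h
    simpa using congrArg Fin.val this
  -- main induction on rows
  have main : ∀ i, i < t → ∃ φ P, GridOuter G t Ps z i φ P := by
    intro i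
    induction i with
    | zero =>
      intro _
      refine ⟨fun _ c => if h : c < 2*t-1 then P₀ ⟨c, h⟩ else z, P₀, hP₀, ?_, ?_, ?_, ?_, ?_, ?_⟩
      · intro j hj h
        have hj' : j < 2*t-1 := by omega
        simp only [dif_pos hj']
        congr 1
        exact Fin.ext (by simp)
      · intro h; rfl
      · intro i' j hi' hj
        have hj' : j < 2*t-1 := by omega
        simp only [dif_pos hj']
        constructor
        · intro hjz
          have : j = 2*t-2 := hP₀inj j (2*t-2) hj' (by omega) hjz
          omega
        · rintro ⟨h1, h2⟩
          omega
      · intro i₁ j₁ i₂ j₂ hi₁ hi₂ hj₁ hj₂ hne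
        have e1 : i₁ = 0 := by omega
        have e2 : i₂ = 0 := by omega
        subst e1; subst e2
        simp only [dif_pos (show j₁ < 2*t-1 by omega), dif_pos (show j₂ < 2*t-1 by omega)]
        intro hcon
        exact hne ⟨rfl, hP₀inj _ _ _ _ hcon⟩
      · intro i' j _ hj1
        simp only [dif_pos (show j < 2*t-1 by omega), dif_pos (show j+1 < 2*t-1 by omega)]
        exact (hpath P₀ hP₀).2 j (by omega)
      · intro i' j h
        exact absurd h (Nat.not_lt_zero _)
    | succ i ih =>
      intro hi1
      obtain ⟨φ, P, hP, ha, hz, hbz, hinj, hE1, hE2⟩ := ih (by omega)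
      set X : Finset V := Finset.image (fun q : ℕ × ℕ => φ q.1 q.2)
        ((Finset.range (i+1)) ×ˢ (Finset.range t)) with hXdef
      have hXcard : X.card ≤ (i+1) * t := by
        rw [hXdef]
        refine le_trans Finset.card_image_le ?_
        rw [Finset.card_product, Finset.card_range, Finset.card_range]
      have hXmem : ∀ i' j', i' ≤ i → j' < t → φ i' j' ∈ X := by
        intro i' j' h1 h2
        rw [hXdef]
        refine Finset.mem_image.mpr ⟨(i', j'), ?_, rfl⟩
        simp only [Finset.mem_product, Finset.mem_range]
        omega
      have inner0 : ∀ m, m ≤ t-1 → ∃ ψ Q, GridInner G t Ps z i φ P (t-1-m) ψ Q := by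
        intro m
        induction m with
        | zero =>
          intro _
          simp only [Nat.sub_zero]
          rcases eq_or_lt_of_le (show i+2 ≤ t by omega) with hcase | hcase
          · -- corner : i = t-2
            refine ⟨fun _ => z, P, hP, ?_, ?_, hz, ?_, ?_⟩
            · intro s h _; rfl
            · intro k hk1 hk2 h
              have e : (⟨i+1+k, h⟩ : Fin (2*t-1)) = ⟨2*t-2, by omega⟩ :=
                Fin.ext (show i+1+k = 2*t-2 by omega)
              rw [e]
              exact hz _
            · intro k hk1 hk2
              refine ⟨?_, ?_, ?_⟩
              · intro i' j' h1 h2 hcon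
                have := (hbz i' j' h1 h2).mp hcon.symm
                omega
              · intro k' hk1' hk2'
                omega
              · exact ⟨fun _ => ⟨by omega, by omega⟩, fun _ => rfl⟩
            · intro k hk1 hk2
              have h1 : P ⟨i + k, by omega⟩ = φ i k := ha k hk2 _
              have h2 := adjQ P hP (i+k) (2*t-2) (by omega) (by omega) (by omega)
              rw [h1, hz] at h2
              exact h2
          · -- fresh pick for column t-1 of row i+1
            have hAcard : (X ∪ {z}).card ≤ t^2 - 1 := by
              have c1 := Finset.card_union_le X ({z} : Finset V)
              have c2 := arith1 t (i+1) 1 (by omega) (by omega)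
              simp only [Finset.card_singleton] at c1
              omega
            obtain ⟨v, hvA, hvPs⟩ := pick P hP (i+t) (by omega) (by omega) (X ∪ {z}) hAcard
            refine ⟨fun _ => v, Function.update P ⟨i+t, by omega⟩ v, hvPs, ?_, ?_, ?_, ?_, ?_⟩
            · intro s h hs
              exact upd_ne P s (i+t) h (by omega) v (by omega)
            · intro k hk1 hk2 h
              exact upd_eq P (i+1+k) (i+t) h (by omega) v (by omega)
            · intro h
              rw [upd_ne P (2*t-2) (i+t) h (by omega) v (by omega)]
              exact hz h
            · intro k hk1 hk2
              refine ⟨?_, ?_, ?_⟩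
              · intro i' j' h1 h2 hcon
                apply hvA
                rw [show v = φ i' j' from hcon]
                exact Finset.mem_union_left _ (hXmem i' j' h1 h2)
              · intro k' h1 h2
                omega
              · constructor
                · intro hvz
                  exact absurd (Finset.mem_union_right _
                    (by rw [show v = z from hvz]; exact Finset.mem_singleton_self z)) hvA
                · rintro ⟨h1, _⟩
                  omega
            · intro k hk1 hk2
              have e1 := upd_ne P (i+t-1) (i+t) (by omega) (by omega) v (by omega)
              have e2 := upd_eq P (i+t) (i+t) (by omega) (by omega) v rfl
              have h2 := adjQ (Function.update P ⟨i+t, by omega⟩ v) hvPs (i+t-1) (i+t)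
                (by omega) (by omega) (by omega)
              rw [e1, e2] at h2
              have h3 : P ⟨i+t-1, by omega⟩ = φ i k := by
                have e : (⟨i+t-1, by omega⟩ : Fin (2*t-1)) = ⟨i + k, by omega⟩ :=
                  Fin.ext (show i+t-1 = i + k by omega)
                rw [e]
                exact ha k hk2 _
              rw [h3] at h2
              exact h2
        | succ m ihm =>
          intro hm
          obtain ⟨ψ, Q', hQ'⟩ := ihm (by omega)
          have hrw : t-1-m = (t-1-(m+1)) + 1 := by omega
          rw [hrw] at hQ'
          generalize hjdef : t-1-(m+1) = j at hQ' ⊢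
          obtain ⟨hQ'm, ia, ib, ie, ic, hid⟩ := hQ'
          set Y : Finset V := Finset.image ψ (Finset.Ico (j+1) t) with hYdef
          have hYcard : Y.card ≤ t - (j+1) := by
            rw [hYdef]
            refine le_trans Finset.card_image_le ?_
            rw [Nat.card_Ico]
          have hYmem : ∀ k, j < k → k < t → ψ k ∈ Y := by
            intro k h1 h2
            rw [hYdef]
            exact Finset.mem_image.mpr ⟨k, Finset.mem_Ico.mpr ⟨by omega, h2⟩, rfl⟩
          have hAcard : (X ∪ Y ∪ {z}).card ≤ t^2 - 1 := by
            rcases eq_or_lt_of_le (show i+2 ≤ t by omega) with hcase | hcase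
            · -- last row: z is already among the chosen vertices
              have hzY : z ∈ Y := by
                have := ((ic (t-1) (by omega) (by omega)).2.2).mpr ⟨by omega, rfl⟩
                rw [← this]
                exact hYmem (t-1) (by omega) (by omega)
              have hsub : X ∪ Y ∪ {z} ⊆ X ∪ Y := by
                intro x hx
                rcases Finset.mem_union.mp hx with hx | hx
                · exact hx
                · rw [Finset.mem_singleton.mp hx]
                  exact Finset.mem_union_right _ hzY
              have c1 := Finset.card_le_card hsub
              have c2 := Finset.card_union_le X Y
              have c3 := arith1 t (i+1) (t-(j+1)) (by omega) (by omega)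
              omega
            · have c1 := Finset.card_union_le (X ∪ Y) ({z} : Finset V)
              have c2 := Finset.card_union_le X Y
              simp only [Finset.card_singleton] at c1
              have c3 := arith2 t (i+1) (t-(j+1)+1) (by omega) (by omega) (by omega)
              omega
          obtain ⟨v, hvA, hvPs⟩ := pick Q' hQ'm (i+1+j) (by omega) (by omega)
            (X ∪ Y ∪ {z}) hAcard
          refine ⟨Function.update ψ j v, Function.update Q' ⟨i+1+j, by omega⟩ v, hvPs,
            ?_, ?_, ?_, ?_, ?_⟩
          · intro s h hs
            rw [upd_ne Q' s (i+1+j) h (by omega) v (by omega)]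
            exact ia s h (by omega)
          · intro k hk1 hk2 h
            rcases Nat.eq_or_lt_of_le hk1 with rfl | hlt
            · rw [upd_eq Q' (i+1+j) (i+1+j) h (by omega) v rfl, Function.update_self]
            · rw [upd_ne Q' (i+1+k) (i+1+j) h (by omega) v (by omega),
                ib k (by omega) hk2 h, Function.update_of_ne (show k ≠ j by omega)]
          · intro h
            rw [upd_ne Q' (2*t-2) (i+1+j) h (by omega) v (by omega)]
            exact ie h
          · intro k hk1 hk2
            rcases Nat.eq_or_lt_of_le hk1 with rfl | hlt
            · have hv : Function.update ψ j v j = v := Function.update_self _ _ _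
              refine ⟨?_, ?_, ?_⟩
              · intro i' j' h1 h2 hcon
                rw [hv] at hcon
                apply hvA
                rw [hcon]
                exact Finset.mem_union_left _ (Finset.mem_union_left _ (hXmem i' j' h1 h2))
              · intro k' h1 h2 hcon
                rw [hv, Function.update_of_ne (show k' ≠ j by omega)] at hcon
                apply hvA
                rw [hcon]
                exact Finset.mem_union_left _ (Finset.mem_union_right _ (hYmem k' h1 h2))
              · rw [hv]
                constructor
                · intro hvz
                  exact absurd (Finset.mem_union_right _
                    (by rw [hvz]; exact Finset.mem_singleton_self z)) hvA
                · rintro ⟨_, h2⟩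
                  omega
            · have hk : Function.update ψ j v k = ψ k :=
                Function.update_of_ne (show k ≠ j by omega) _ _
              obtain ⟨c1, c2, c3⟩ := ic k (by omega) hk2
              refine ⟨?_, ?_, ?_⟩
              · intro i' j' h1 h2
                rw [hk]
                exact c1 i' j' h1 h2
              · intro k' h1 h2
                rw [hk, Function.update_of_ne (show k' ≠ j by omega)]
                exact c2 k' h1 h2
              · rw [hk]
                exact c3
          · intro k hk1 hk2
            rcases Nat.eq_or_lt_of_le hk1 with rfl | hlt
            · have e0 : Function.update Q' ⟨i+1+j, by omega⟩ v ⟨i+j, by omega⟩ = φ i j := by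
                rw [upd_ne Q' (i+j) (i+1+j) (by omega) (by omega) v (by omega),
                  ia (i+j) (by omega) (by omega)]
                exact ha j (by omega) _
              have e1 := upd_eq Q' (i+1+j) (i+1+j) (by omega) (by omega) v rfl
              have h2 := adjQ (Function.update Q' ⟨i+1+j, by omega⟩ v) hvPs (i+j) (i+1+j)
                (by omega) (by omega) (by omega)
              rw [e0, e1] at h2
              rw [Function.update_self]
              exact h2
            · rw [Function.update_of_ne (show k ≠ j by omega)]
              exact hid k (by omega) hk2
      -- assemble row i+1
      obtain ⟨ψ, Q, hQ0⟩ := inner0 (t-1) le_rfl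
      rw [show t-1-(t-1) = 0 from by omega] at hQ0
      obtain ⟨hQ, ia, ib, ie, ic, hid⟩ := hQ0
      refine ⟨Function.update φ (i+1) ψ, Q, hQ, ?_, ?_, ?_, ?_, ?_, ?_⟩
      · intro j hj h
        rw [Function.update_self]
        exact ib j (by omega) hj h
      · exact ie
      · intro i' j h1 h2
        by_cases hii : i' = i+1
        · subst hii
          rw [Function.update_self]
          exact (ic j (by omega) h2).2.2
        · rw [Function.update_of_ne hii]
          exact hbz i' j (by omega) h2
      · intro i₁ j₁ i₂ j₂ h1 h2 hj1 hj2 hne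
        by_cases e1 : i₁ = i+1 <;> by_cases e2 : i₂ = i+1
        · subst e1; subst e2
          rw [Function.update_self]
          have hjj : j₁ ≠ j₂ := fun h => hne ⟨rfl, h⟩
          rcases Nat.lt_or_ge j₁ j₂ with hlt | hge
          · exact (ic j₁ (by omega) hj1).2.1 j₂ hlt hj2
          · exact ((ic j₂ (by omega) hj2).2.1 j₁ (by omega) hj1).symm
        · subst e1
          rw [Function.update_self, Function.update_of_ne e2]
          exact (ic j₁ (by omega) hj1).1 i₂ j₂ (by omega) hj2
        · subst e2
          rw [Function.update_self, Function.update_of_ne e1]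
          exact ((ic j₂ (by omega) hj2).1 i₁ j₁ (by omega) hj1).symm
        · rw [Function.update_of_ne e1, Function.update_of_ne e2]
          exact hinj i₁ j₁ i₂ j₂ (by omega) (by omega) hj1 hj2 hne
      · intro i' j h1 hj1
        by_cases hii : i' = i+1
        · subst hii
          rw [Function.update_self]
          have q1 := ib j (by omega) (by omega) (show i+1+j < 2*t-1 by omega)
          have q2 := ib (j+1) (by omega) (by omega) (show i+1+(j+1) < 2*t-1 by omega)
          have h2 := adjQ Q hQ (i+1+j) (i+1+(j+1)) (by omega) (by omega) (by omega)
          rw [q1, q2] at h2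
          exact h2
        · rw [Function.update_of_ne hii]
          exact hE1 i' j (by omega) hj1
      · intro i' j h1 hj
        by_cases hii : i' = i
        · rw [Function.update_of_ne (show i' ≠ i+1 by omega), hii, Function.update_self]
          exact hid j (by omega) hj
        · rw [Function.update_of_ne (show i' ≠ i+1 by omega),
            Function.update_of_ne (show i'+1 ≠ i+1 by omega)]
          exact hE2 i' j (by omega) hj
  obtain ⟨φ, P, hP, ha, hz, hbz, hinj, hE1, hE2⟩ := main (t-1) (by omega)
  refine ⟨fun x => φ x.1.val x.2.val, ?_, ?_⟩
  · intro x y hxy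
    by_contra hne
    refine hinj x.1.val x.2.val y.1.val y.2.val (by omega) (by omega) x.2.isLt y.2.isLt
      ?_ hxy
    rintro ⟨h1, h2⟩
    exact hne (Prod.ext (Fin.ext h1) (Fin.ext h2))
  · intro a b hab
    rw [gridGraph, boxProd_adj] at hab
    rcases hab with ⟨h, he⟩ | ⟨h, he⟩
    · rw [pathGraph_adj] at h
      have he' : (a.2 : ℕ) = (b.2 : ℕ) := by rw [he]
      show G.Adj (φ a.1.val a.2.val) (φ b.1.val b.2.val)
      rcases h with h | h
      · rw [he', ← h]
        exact hE2 a.1.val b.2.val (by have := b.1.isLt; omega) b.2.isLt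
      · rw [← he', ← h]
        exact (hE2 b.1.val a.2.val (by have := a.1.isLt; omega) a.2.isLt).symm
    · rw [pathGraph_adj] at h
      have he' : (a.1 : ℕ) = (b.1 : ℕ) := by rw [he]
      show G.Adj (φ a.1.val a.2.val) (φ b.1.val b.2.val)
      rcases h with h | h
      · rw [he', ← h]
        exact hE1 b.1.val a.2.val (by omega) (by rw [h]; exact b.2.isLt)
      · rw [← he', ← h]
        exact (hE1 a.1.val b.2.val (by omega) (by rw [h]; exact a.2.isLt)).symm
end

section
/- Let k, ℓ be positive integers with ℓ ≥ 2 and let 𝒞 be a non-empty (kℓ)-rich collection of 2ℓ-cycles in a graph G. Then G contains the cylinder quadrangulation P_{k,ℓ} as a subgraph. -/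
open SimpleGraph

/-- The quadrangulation `P_{k,ℓ}` of the cylinder (rows `0,…,k-1`, columns modulo `ℓ`):
row `i` is joined to row `i+1` vertically, and diagonally according to the parity of `i`. -/
def cylinderGraph (k l : ℕ) : SimpleGraph (Fin k × ZMod l) :=
  SimpleGraph.fromRel (fun a b => a.1.val + 1 = b.1.val ∧
    (a.2 = b.2 ∨ (Even a.1.val ∧ a.2 = b.2 + 1) ∨ (Odd a.1.val ∧ b.2 = a.2 + 1)))

/-- `c : ZMod m → V` is a (labelled) cycle on `m` vertices in `G`. -/
def IsCycleIn {V : Type*} (G : SimpleGraph V) {m : ℕ} (c : ZMod m → V) : Prop :=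
  Function.Injective c ∧ ∀ i : ZMod m, G.Adj (c i) (c (i + 1))

/-!
Place row `i` of `P_{k,ℓ}` on the positions of parity `i` of a `2ℓ`-cycle: the edges of
`P_{k,ℓ}` between rows `i` and `i + 1` then form exactly a `2ℓ`-cycle. Starting from any cycle
of `𝒞`, build cycles `c₀, c₁, …, c_{k-1}` in `𝒞`, where `cᵢ₊₁` keeps the positions of row `i`
of `cᵢ` and resamples the other `ℓ` positions one at a time. Richness lets every new vertex
avoid the fewer than `kℓ` vertices already used, so the `k` rows are disjoint.
-/

lemma IsCycleIn.adj_of_add_one_eq {V : Type*} {G : SimpleGraph V} {m : ℕ} {c : ZMod m → V}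
    (hc : IsCycleIn G c) {x y : ZMod m} (hxy : x + 1 = y ∨ y + 1 = x) : G.Adj (c x) (c y) := by
  rcases hxy with rfl | rfl
  · exact hc.2 x
  · exact (hc.2 y).symm

def cyclePos (l i : ℕ) (j : ZMod l) : ZMod (2 * l) := ((2 * j.val + i % 2 : ℕ) : ZMod (2 * l))

section cyclePos

variable {l : ℕ} {i i' : ℕ} {j j' : ZMod l}

lemma cyclePos_val [NeZero l] : (cyclePos l i j).val = 2 * j.val + i % 2 :=
  ZMod.val_natCast_of_lt (by have := ZMod.val_lt j; omega)

lemma cyclePos_eq_cyclePos_iff [NeZero l] :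
    cyclePos l i j = cyclePos l i' j' ↔ i % 2 = i' % 2 ∧ j = j' := by
  refine ⟨fun h => ?_, fun ⟨hi, hj⟩ => by rw [cyclePos, cyclePos, hi, hj]⟩
  have hval := congrArg ZMod.val h
  rw [cyclePos_val, cyclePos_val] at hval
  exact ⟨by omega, ZMod.val_injective l (by omega)⟩

lemma cyclePos_add_two : cyclePos l (i + 2) j = cyclePos l i j := by
  simp [cyclePos]

lemma cyclePos_add_one_of_even (hi : Even i) : cyclePos l i j + 1 = cyclePos l (i + 1) j := by
  have h0 : i % 2 = 0 := Nat.even_iff.1 hi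
  simp only [cyclePos, h0, Nat.succ_mod_two_eq_one_iff.2 h0]
  push_cast
  ring

lemma cyclePos_add_one_of_odd [NeZero l] (hi : Odd i) :
    cyclePos l i j + 1 = cyclePos l (i + 1) (j + 1) := by
  have h1 : i % 2 = 1 := Nat.odd_iff.1 hi
  have hval : (j + 1).val = (j.val + 1) % l := by
    rw [ZMod.val_add, ZMod.val_one_eq_one_mod, Nat.add_mod_mod]
  rw [cyclePos, cyclePos, h1, Nat.succ_mod_two_eq_zero_iff.2 h1, hval, add_zero,
    ← Nat.cast_add_one, ZMod.natCast_eq_natCast_iff', Nat.mul_mod_mul_left, Nat.mod_mod,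
    show 2 * j.val + 1 + 1 = 2 * (j.val + 1) by ring, Nat.mul_mod_mul_left]

lemma cyclePos_add_one_eq_of_cylinder [NeZero l]
    (h : j = j' ∨ (Even i ∧ j = j' + 1) ∨ (Odd i ∧ j' = j + 1)) :
    cyclePos l i j + 1 = cyclePos l (i + 1) j' ∨ cyclePos l (i + 1) j' + 1 = cyclePos l i j := by
  rcases Nat.even_or_odd i with hi | hi
  · rcases h with rfl | ⟨-, rfl⟩ | ⟨hodd, -⟩
    · exact .inl (cyclePos_add_one_of_even hi)
    · exact .inr (by rw [cyclePos_add_one_of_odd hi.add_one, cyclePos_add_two])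
    · exact absurd hodd (Nat.not_odd_iff_even.2 hi)
  · rcases h with rfl | ⟨heven, -⟩ | ⟨-, rfl⟩
    · exact .inr (by rw [cyclePos_add_one_of_even hi.add_one, cyclePos_add_two])
    · exact absurd heven (Nat.not_even_iff_odd.2 hi)
    · exact .inl (cyclePos_add_one_of_odd hi)

end cyclePos

def IsRich {V : Type*} {m : ℕ} (Cs : Set (ZMod m → V)) (α : ℕ) : Prop :=
  ∀ c ∈ Cs, ∀ i : ZMod m, α ≤ {v | Function.update c i v ∈ Cs}.ncard

namespace IsRich

variable {V : Type*} {m α : ℕ} {Cs : Set (ZMod m → V)} {c : ZMod m → V} {R : Finset V}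

lemma exists_update_notMem (hrich : IsRich Cs α) (hc : c ∈ Cs) (t : ZMod m) (hR : R.card < α) :
    ∃ v ∉ R, Function.update c t v ∈ Cs := by
  by_contra! h
  have hsub : {v | Function.update c t v ∈ Cs} ⊆ R := fun v hv => by_contra fun hvR => h v hvR hv
  have := (Set.ncard_le_ncard hsub R.finite_toSet).trans_eq (Set.ncard_coe_finset R)
  have := hrich c hc t
  omega

lemma exists_resample_avoiding (hrich : IsRich Cs α) (hc : c ∈ Cs) (hR : R.card < α)
    (T : Finset (ZMod m)) : ∃ c' ∈ Cs, (∀ t ∉ T, c' t = c t) ∧ ∀ t ∈ T, c' t ∉ R := by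
  induction T using Finset.induction with
  | empty => exact ⟨c, hc, fun _ _ => rfl, by simp⟩
  | @insert a T ha ih =>
    obtain ⟨c', hc', hfix, hfresh⟩ := ih
    obtain ⟨v, hvR, hv⟩ := hrich.exists_update_notMem hc' a hR
    refine ⟨Function.update c' a v, hv, fun t ht => ?_, fun t ht => ?_⟩
    · rw [Finset.mem_insert, not_or] at ht
      rw [Function.update_of_ne ht.1, hfix t ht.2]
    · rcases eq_or_ne t a with rfl | hta
      · rwa [Function.update_self]
      · rw [Function.update_of_ne hta]
        exact hfresh t ((Finset.mem_insert.1 ht).resolve_left hta)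

end IsRich

/-- Row `i` of the cylinder is placed on the cycle `c i` at the positions of parity `i`; since
`c (i + 1)` passes through row `i` as well, it carries the edges between rows `i` and `i + 1`. -/
def IsCycleLadder {V : Type*} {l : ℕ} (Cs : Set (ZMod (2 * l) → V)) (n : ℕ)
    (c : ℕ → ZMod (2 * l) → V) : Prop :=
  (∀ i, c i ∈ Cs) ∧ (∀ i < n, ∀ j, c (i + 1) (cyclePos l i j) = c i (cyclePos l i j)) ∧
    Set.InjOn (fun q : ℕ × ZMod l => c q.1 (cyclePos l q.1 q.2)) {q | q.1 ≤ n}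

namespace IsCycleLadder

variable {V : Type*} {l n α : ℕ} [NeZero l] {Cs : Set (ZMod (2 * l) → V)}
  {c : ℕ → ZMod (2 * l) → V}

lemma const {c₀ : ZMod (2 * l) → V} (hc₀ : c₀ ∈ Cs) (hinj : Function.Injective c₀) :
    IsCycleLadder Cs 0 (fun _ => c₀) := by
  refine ⟨fun _ => hc₀, by simp, ?_⟩
  rintro ⟨i, j⟩ (hi : i ≤ 0) ⟨i', j'⟩ (hi' : i' ≤ 0) h
  obtain rfl : i = 0 := by omega
  obtain rfl : i' = 0 := by omega
  exact congrArg _ (cyclePos_eq_cyclePos_iff.1 (hinj h)).2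

lemma exists_succ (h : IsCycleLadder Cs n c) (hrich : IsRich Cs α)
    (hinj : ∀ c ∈ Cs, Function.Injective c) (hα : (n + 1) * l < α) :
    ∃ c', IsCycleLadder Cs (n + 1) c' := by
  classical
  obtain ⟨hmem, hagree, hinjOn⟩ := h
  set R := (Finset.range (n + 1) ×ˢ Finset.univ).image
    (fun q : ℕ × ZMod l => c q.1 (cyclePos l q.1 q.2))
  have hmemR : ∀ i ≤ n, ∀ j, c i (cyclePos l i j) ∈ R := fun i hi j =>
    Finset.mem_image.2 ⟨(i, j), by simpa [Nat.lt_succ_iff] using hi, rfl⟩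
  have hR : R.card < α := calc
    R.card ≤ (n + 1) * l := Finset.card_image_le.trans (by simp [ZMod.card])
    _ < α := hα
  obtain ⟨c', hc', hfix, hfresh⟩ :=
    hrich.exists_resample_avoiding (hmem n) hR (Finset.univ.image (cyclePos l (n + 1)))
  have hnew : ∀ j, c' (cyclePos l (n + 1) j) ∉ R := fun j =>
    hfresh _ (Finset.mem_image_of_mem _ (Finset.mem_univ j))
  have hold : ∀ i ≤ n, Function.update c (n + 1) c' i = c i := fun i hi =>
    Function.update_of_ne (by omega) _ _
  refine ⟨Function.update c (n + 1) c', fun i => ?_, fun i hi j => ?_, ?_⟩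
  · rcases eq_or_ne i (n + 1) with rfl | hi
    · simpa using hc'
    · simpa [hi] using hmem i
  · rcases Nat.lt_succ_iff_lt_or_eq.1 hi with hi | rfl
    · rw [hold (i + 1) hi, hold i hi.le, hagree i hi j]
    · rw [Function.update_self, hold i le_rfl]
      refine hfix _ fun ht => ?_
      obtain ⟨j', -, hj'⟩ := Finset.mem_image.1 ht
      have := (cyclePos_eq_cyclePos_iff.1 hj').1
      omega
  · rintro ⟨i, j⟩ (hi : i ≤ n + 1) ⟨i', j'⟩ (hi' : i' ≤ n + 1) h
    dsimp only at h
    rcases Nat.le_succ_iff.1 hi with hi | rfl <;> rcases Nat.le_succ_iff.1 hi' with hi' | rfl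
    · rw [hold i hi, hold i' hi'] at h
      exact hinjOn hi hi' h
    · rw [hold i hi, Function.update_self] at h
      exact absurd (h ▸ hmemR i hi j) (hnew j')
    · rw [Function.update_self, hold i' hi'] at h
      exact absurd (h ▸ hmemR i' hi' j') (hnew j)
    · rw [Function.update_self] at h
      exact congrArg _ (cyclePos_eq_cyclePos_iff.1 (hinj c' hc' h)).2

lemma exists_of_le (hrich : IsRich Cs α) (hne : Cs.Nonempty)
    (hinj : ∀ c ∈ Cs, Function.Injective c) : ∀ n, (n + 1) * l ≤ α → ∃ c, IsCycleLadder Cs n c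
  | 0, _ => ⟨_, const hne.some_mem (hinj _ hne.some_mem)⟩
  | n + 1, hα => by
    obtain ⟨c, hc⟩ := exists_of_le hrich hne hinj n (by nlinarith [NeZero.pos l])
    exact hc.exists_succ hrich hinj (by nlinarith [NeZero.pos l])

lemma contains {G : SimpleGraph V} (hcyc : ∀ c ∈ Cs, IsCycleIn G c)
    (h : IsCycleLadder Cs n c) : Contains (cylinderGraph (n + 1) l) G := by
  obtain ⟨hmem, hagree, hinjOn⟩ := h
  have hadj : ∀ a b : Fin (n + 1) × ZMod l, a.1.val + 1 = b.1.val ∧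
      (a.2 = b.2 ∨ (Even a.1.val ∧ a.2 = b.2 + 1) ∨ (Odd a.1.val ∧ b.2 = a.2 + 1)) →
      G.Adj (c a.1 (cyclePos l a.1 a.2)) (c b.1 (cyclePos l b.1 b.2)) := by
    rintro ⟨⟨i, _⟩, j⟩ ⟨⟨_, hi'⟩, j'⟩ ⟨rfl, hcol⟩
    dsimp only at hi' hcol ⊢
    rw [← hagree i (by omega) j]
    exact (hcyc _ (hmem _)).adj_of_add_one_eq (cyclePos_add_one_eq_of_cylinder hcol)
  refine ⟨fun q => c q.1 (cyclePos l q.1 q.2), fun a b hab => ?_, fun a b hab => ?_⟩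
  · have := @hinjOn (a.1.val, a.2) (Nat.lt_succ_iff.1 a.1.isLt) (b.1.val, b.2)
      (Nat.lt_succ_iff.1 b.1.isLt) hab
    simp only [Prod.mk.injEq] at this
    exact Prod.ext (Fin.ext this.1) this.2
  · rcases (fromRel_adj _ a b).1 hab with ⟨-, h | h⟩
    · exact hadj a b h
    · exact (hadj b a h).symm

end IsCycleLadder

theorem cylinder_of_rich_cycles_general {V : Type*} (k l α : ℕ)
    (hk : 0 < k) (hl : 2 ≤ l) (hα : k * l ≤ α) (G : SimpleGraph V)
    (Cs : Set (ZMod (2 * l) → V)) (hne : Cs.Nonempty)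
    (hcyc : ∀ c ∈ Cs, IsCycleIn G c)
    (hrich : ∀ c ∈ Cs, ∀ i : ZMod (2 * l),
      α ≤ {v | Function.update c i v ∈ Cs}.ncard) :
    Contains (cylinderGraph k l) G := by
  have : NeZero l := ⟨by omega⟩
  obtain ⟨n, rfl⟩ := Nat.exists_eq_add_one.2 hk
  obtain ⟨c, hc⟩ := IsCycleLadder.exists_of_le hrich hne (fun c hc => (hcyc c hc).1) n hα
  exact hc.contains hcyc

/-- If `G` has a non-empty `(kℓ)`-rich collection of `2ℓ`-cycles, then `G` contains the
cylinder quadrangulation `P_{k,ℓ}` as a subgraph. -/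
theorem cylinder_of_rich_cycles {V : Type*} [Fintype V] [DecidableEq V] (k l α : ℕ)
    (hk : 0 < k) (hl : 2 ≤ l) (hα : k * l ≤ α) (G : SimpleGraph V)
    (Cs : Set (ZMod (2 * l) → V)) (hne : Cs.Nonempty)
    (hcyc : ∀ c ∈ Cs, IsCycleIn G c)
    (hrich : ∀ c ∈ Cs, ∀ i : ZMod (2 * l),
      α ≤ {v | Function.update c i v ∈ Cs}.ncard) :
    Contains (cylinderGraph k l) G :=
  cylinder_of_rich_cycles_general k l α hk hl hα G Cs hne hcyc hrich
end

section
/- Let k > ℓ be positive integers with k even. Then for any n-vertex graph G, (hom(P_{k+1}, G)/n)^{1/k} ≥ (hom(P_{ℓ+1}, G)/n)^{1/ℓ}, where hom(P_{m}, G) denotes the number of graph homomorphisms from the path on m vertices into G. -/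
set_option maxHeartbeats 1000000


open SimpleGraph

/-- The number of homomorphisms from the path on `m` vertices into `G`
(i.e. walks of length `m-1` in `G`). -/
noncomputable def homPathCount {V : Type*} (G : SimpleGraph V) (m : ℕ) : ℕ :=
  Nat.card (pathGraph m →g G)

section Counting

variable {V : Type*} [Fintype V] [DecidableEq V] (G : SimpleGraph V) [DecidableRel G.Adj]

private lemma card_pathFun (m : ℕ) (v : V) :
    (Finset.univ.filter (fun f : Fin (m + 1) → V =>
      (∀ i : Fin m, G.Adj (f i.castSucc) (f i.succ)) ∧ f (Fin.last m) = v)).card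
      = ∑ u, ((G.adjMatrix ℕ) ^ m) u v := by
  induction m generalizing v with
  | zero =>
      have h1 : (Finset.univ.filter (fun f : Fin 1 → V =>
          (∀ i : Fin 0, G.Adj (f i.castSucc) (f i.succ)) ∧ f (Fin.last 0) = v))
          = {fun _ => v} := by
        ext f
        simp only [Finset.mem_filter, Finset.mem_univ, true_and, Finset.mem_singleton]
        constructor
        · rintro ⟨-, h⟩
          funext i
          rw [Subsingleton.elim i (Fin.last 0), h]
        · rintro rfl
          exact ⟨fun i => i.elim0, rfl⟩
      rw [h1, Finset.card_singleton]
      simp [Matrix.one_apply]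
  | succ m ih =>
      have hinj : Function.Injective
          (fun g : Fin (m + 1) → V => (Fin.snoc g v : Fin (m + 2) → V)) := by
        intro g g' h
        simpa [Fin.init_snoc] using congrArg Fin.init h
      have hset : (Finset.univ.filter (fun f : Fin (m + 2) → V =>
          (∀ i : Fin (m + 1), G.Adj (f i.castSucc) (f i.succ)) ∧ f (Fin.last (m + 1)) = v))
          = (G.neighborFinset v).biUnion (fun w =>
              (Finset.univ.filter (fun g : Fin (m + 1) → V =>
                (∀ i : Fin m, G.Adj (g i.castSucc) (g i.succ)) ∧ g (Fin.last m) = w)).image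
                (fun g : Fin (m + 1) → V => (Fin.snoc g v : Fin (m + 2) → V))) := by
        ext f
        simp only [Finset.mem_filter, Finset.mem_univ, true_and, Finset.mem_biUnion,
          Finset.mem_image, SimpleGraph.mem_neighborFinset]
        constructor
        · rintro ⟨hadj, hlast⟩
          refine ⟨f (Fin.last m).castSucc, ?_, Fin.init f, ⟨⟨fun i => ?_, rfl⟩, ?_⟩⟩
          · have h := hadj (Fin.last m)
            rw [Fin.succ_last, hlast] at h
            exact h.symm
          · have h := hadj i.castSucc
            rw [Fin.succ_castSucc] at h
            exact h
          · rw [← hlast]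
            exact Fin.snoc_init_self f
        · rintro ⟨w, hadjvw, g, ⟨hg, hglast⟩, rfl⟩
          refine ⟨fun i => ?_, Fin.snoc_last _ _⟩
          refine Fin.lastCases ?_ (fun j => ?_) i
          · rw [Fin.succ_last, Fin.snoc_last, Fin.snoc_castSucc, hglast]
            exact hadjvw.symm
          · rw [Fin.succ_castSucc, Fin.snoc_castSucc, Fin.snoc_castSucc]
            exact hg j
      have hdisj : ∀ w ∈ G.neighborFinset v, ∀ w' ∈ G.neighborFinset v, w ≠ w' →
          Disjoint ((Finset.univ.filter (fun g : Fin (m + 1) → V =>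
              (∀ i : Fin m, G.Adj (g i.castSucc) (g i.succ)) ∧ g (Fin.last m) = w)).image
              (fun g : Fin (m + 1) → V => (Fin.snoc g v : Fin (m + 2) → V)))
            ((Finset.univ.filter (fun g : Fin (m + 1) → V =>
              (∀ i : Fin m, G.Adj (g i.castSucc) (g i.succ)) ∧ g (Fin.last m) = w')).image
              (fun g : Fin (m + 1) → V => (Fin.snoc g v : Fin (m + 2) → V))) := by
        intro w _ w' _ hne
        rw [Finset.disjoint_left]
        rintro f hf hf'
        obtain ⟨g, hg, rfl⟩ := Finset.mem_image.mp hf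
        obtain ⟨g', hg', heq⟩ := Finset.mem_image.mp hf'
        have hgg : g' = g := hinj heq
        rw [Finset.mem_filter] at hg hg'
        exact hne (by rw [← hg.2.2, ← hg'.2.2, hgg])
      rw [hset]
      rw [Finset.card_biUnion hdisj]
      have hnb : G.neighborFinset v = Finset.univ.filter (fun w => G.Adj w v) := by
        ext w
        simp [SimpleGraph.mem_neighborFinset, G.adj_comm]
      calc ∑ w ∈ G.neighborFinset v,
            ((Finset.univ.filter (fun g : Fin (m + 1) → V =>
              (∀ i : Fin m, G.Adj (g i.castSucc) (g i.succ)) ∧ g (Fin.last m) = w)).image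
              (fun g : Fin (m + 1) → V => (Fin.snoc g v : Fin (m + 2) → V))).card
          = ∑ w ∈ G.neighborFinset v, ∑ u, ((G.adjMatrix ℕ) ^ m) u w := by
            refine Finset.sum_congr rfl fun w _ => ?_
            rw [Finset.card_image_of_injective _ hinj, ih]
        _ = ∑ w, if G.Adj w v then ∑ u, ((G.adjMatrix ℕ) ^ m) u w else 0 := by
            rw [hnb, Finset.sum_filter]
        _ = ∑ w, ∑ u, ((G.adjMatrix ℕ) ^ m) u w * (G.adjMatrix ℕ) w v := by
            refine Finset.sum_congr rfl fun w _ => ?_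
            rw [SimpleGraph.adjMatrix_apply]
            by_cases h : G.Adj w v <;> simp [h, Finset.sum_mul]
        _ = ∑ u, ∑ w, ((G.adjMatrix ℕ) ^ m) u w * (G.adjMatrix ℕ) w v := Finset.sum_comm
        _ = ∑ u, ((G.adjMatrix ℕ) ^ (m + 1)) u v := by
            refine Finset.sum_congr rfl fun u _ => ?_
            rw [pow_succ, Matrix.mul_apply]

private lemma homPathCount_eq (m : ℕ) :
    homPathCount G (m + 1) = ∑ u, ∑ v, ((G.adjMatrix ℕ) ^ m) u v := by
  have e : (pathGraph (m + 1) →g G) ≃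
      {f : Fin (m + 1) → V // ∀ i : Fin m, G.Adj (f i.castSucc) (f i.succ)} :=
    { toFun := fun h => ⟨h, fun i => h.map_adj (by
        rw [pathGraph_adj]
        left
        simp)⟩
      invFun := fun f => ⟨f.1, by
        intro a b hab
        rw [pathGraph_adj] at hab
        rcases hab with h | h
        · have ha : a.val < m := by omega
          have hA : a = (⟨a.val, ha⟩ : Fin m).castSucc := by
            apply Fin.ext
            rfl
          have hB : b = (⟨a.val, ha⟩ : Fin m).succ := by
            apply Fin.ext
            simp [Fin.val_succ, ← h]
          rw [show f.1 a = f.1 ((⟨a.val, ha⟩ : Fin m).castSucc) from congrArg f.1 hA,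
            show f.1 b = f.1 ((⟨a.val, ha⟩ : Fin m).succ) from congrArg f.1 hB]
          exact f.2 _
        · have hb : b.val < m := by omega
          have hA : a = (⟨b.val, hb⟩ : Fin m).succ := by
            apply Fin.ext
            simp [Fin.val_succ, ← h]
          have hB : b = (⟨b.val, hb⟩ : Fin m).castSucc := by
            apply Fin.ext
            rfl
          rw [show f.1 a = f.1 ((⟨b.val, hb⟩ : Fin m).succ) from congrArg f.1 hA,
            show f.1 b = f.1 ((⟨b.val, hb⟩ : Fin m).castSucc) from congrArg f.1 hB]
          exact (f.2 _).symm⟩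
      left_inv := fun h => rfl
      right_inv := fun f => rfl }
  rw [homPathCount, Nat.card_congr e, Nat.card_eq_fintype_card, Fintype.card_subtype]
  rw [Finset.card_eq_sum_card_fiberwise
    (f := fun f : Fin (m + 1) → V => f (Fin.last m)) (t := Finset.univ)
    (fun f _ => Finset.mem_univ _)]
  simp only [Finset.filter_filter]
  rw [Finset.sum_congr rfl fun v _ => card_pathFun G m v, Finset.sum_comm]

private lemma homPathCount_cast (m : ℕ) :
    (homPathCount G (m + 1) : ℝ) = ∑ u, ∑ v, ((G.adjMatrix ℝ) ^ m) u v := by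
  have h1 : (G.adjMatrix ℕ).map (Nat.cast : ℕ → ℝ) = G.adjMatrix ℝ := by
    ext u v
    simp [Matrix.map_apply, SimpleGraph.adjMatrix_apply, apply_ite (Nat.cast : ℕ → ℝ)]
  have hmap : ((G.adjMatrix ℕ) ^ m).map (Nat.cast : ℕ → ℝ) = (G.adjMatrix ℝ) ^ m := by
    have h2 := map_pow ((Nat.castRingHom ℝ).mapMatrix) (G.adjMatrix ℕ) m
    simp only [RingHom.mapMatrix_apply] at h2
    rw [show ((Nat.castRingHom ℝ) : ℕ → ℝ) = (Nat.cast : ℕ → ℝ) from rfl] at h2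
    rw [h2, h1]
  rw [homPathCount_eq, ← hmap]
  push_cast
  simp [Matrix.map_apply]

end Counting

private lemma moment_ineq (w : ℕ → ℝ) (n : ℝ) (hn : 0 < n) (h0 : w 0 = n)
    (hnn : ∀ m, 0 ≤ w m) (hcs : ∀ a b, w (a + b) ^ 2 ≤ w (2 * a) * w (2 * b))
    (l t : ℕ) (hl : 0 < l) (hlt : l < 2 * t) :
    (w l / n) ^ ((1 : ℝ) / l) ≤ (w (2 * t) / n) ^ ((1 : ℝ) / (2 * t : ℕ)) := by
  have ht : 0 < t := by omega
  -- main claim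
  have hC : w l ^ (2 * t) ≤ n ^ (2 * t - l) * w (2 * t) ^ l := by
    by_cases hzero : w (2 * t) = 0
    · -- degenerate case: all moments vanish
      have hdown : ∀ j s, s + j = t → 1 ≤ s → w (2 * s) = 0 := by
        intro j
        induction j with
        | zero =>
            intro s hs _
            rw [show s = t by omega]
            exact hzero
        | succ j ihj =>
            intro s hs hs1
            have h1 : w (2 * (s + 1)) = 0 := ihj (s + 1) (by omega) (by omega)
            have h2 := hcs (s - 1) (s + 1)
            rw [show s - 1 + (s + 1) = 2 * s by omega, h1, mul_zero] at h2
            exact pow_eq_zero_iff two_ne_zero |>.mp (le_antisymm h2 (sq_nonneg _))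
      have h1zero : w 2 = 0 := by
        have := hdown (t - 1) 1 (by omega) le_rfl
        simpa using this
      have hup : ∀ j, w (2 * (1 + j)) = 0 := by
        intro j
        induction j with
        | zero => simpa using h1zero
        | succ j ihj =>
            have h2 := hcs (1 + j) (3 + j)
            rw [show (1 + j) + (3 + j) = 2 * (1 + (j + 1)) by ring,
              show (3 : ℕ) + j = 1 + j + 2 by ring] at h2
            rw [show 2 * (1 + j) = 2 * (1 + j) from rfl, ihj, zero_mul] at h2
            exact pow_eq_zero_iff two_ne_zero |>.mp (le_antisymm h2 (sq_nonneg _))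
      have hwl : w l = 0 := by
        have h2 := hcs 0 l
        rw [zero_add, mul_zero] at h2
        have hl0 : w (2 * l) = 0 := by
          have := hup (l - 1)
          rwa [show 1 + (l - 1) = l by omega] at this
        rw [hl0, mul_zero] at h2
        exact pow_eq_zero_iff two_ne_zero |>.mp (le_antisymm h2 (sq_nonneg _))
      rw [hwl, zero_pow (by omega : 2 * t ≠ 0)]
      positivity
    · -- positive case
      have hupos : ∀ s, s ≤ t → 0 < w (2 * s) := by
        intro s hst
        rcases (hnn (2 * s)).lt_or_eq with h | h
        · exact h
        · exfalso
          apply hzero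
          have hup2 : ∀ j, w (2 * (s + j)) = 0 := by
            intro j
            induction j with
            | zero => simpa using h.symm
            | succ j ihj =>
                have h2 := hcs (s + j) (s + j + 2)
                rw [show (s + j) + (s + j + 2) = 2 * (s + (j + 1)) by ring,
                  show s + j + 2 = s + (j + 2) by ring] at h2
                rw [show 2 * (s + j) = 2 * (s + j) from rfl, ihj, zero_mul] at h2
                exact pow_eq_zero_iff two_ne_zero |>.mp (le_antisymm h2 (sq_nonneg _))
          have h3 := hup2 (t - s)
          rwa [show s + (t - s) = t by omega] at h3
      have hP : ∀ s, s + 1 ≤ t → w (2 * s) ^ (s + 1) ≤ n * w (2 * (s + 1)) ^ s := by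
        intro s
        induction s with
        | zero =>
            intro _
            simp [h0]
        | succ s ihs =>
            intro hst
            have hP' := ihs (by omega)
            have hlc := hcs s (s + 2)
            rw [show s + (s + 2) = 2 * (s + 1) by ring] at hlc
            have hpos1 : 0 < w (2 * (s + 1)) := hupos _ (by omega)
            refine le_of_mul_le_mul_right ?_ (pow_pos hpos1 s)
            have h1 : (w (2 * (s + 1)) ^ 2) ^ (s + 1) ≤ (w (2 * s) * w (2 * (s + 2))) ^ (s + 1) :=
              pow_le_pow_left₀ (sq_nonneg _) hlc (s + 1)
            rw [← pow_mul, mul_pow] at h1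
            have h2 : w (2 * s) ^ (s + 1) * w (2 * (s + 2)) ^ (s + 1)
                ≤ (n * w (2 * (s + 1)) ^ s) * w (2 * (s + 2)) ^ (s + 1) :=
              mul_le_mul_of_nonneg_right hP' (pow_nonneg (hnn _) _)
            calc w (2 * (s + 1)) ^ (s + 1 + 1) * w (2 * (s + 1)) ^ s
                = w (2 * (s + 1)) ^ (2 * (s + 1)) := by
                  rw [← pow_add]
                  congr 1
                  omega
              _ ≤ (n * w (2 * (s + 1)) ^ s) * w (2 * (s + 2)) ^ (s + 1) := le_trans h1 h2
              _ = n * w (2 * (s + 1 + 1)) ^ (s + 1) * w (2 * (s + 1)) ^ s := by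
                  rw [show s + 2 = s + 1 + 1 from rfl]
                  ring
      have hM : ∀ d s, s + d ≤ t → w (2 * s) ^ (s + d) ≤ n ^ d * w (2 * (s + d)) ^ s := by
        intro d
        induction d with
        | zero =>
            intro s _
            simp
        | succ d ihd =>
            intro s hst
            have hPs := hP s (by omega)
            have hIH := ihd (s + 1) (by omega)
            have hkey : (w (2 * s) ^ (s + (d + 1))) ^ (s + 1)
                ≤ (n ^ (d + 1) * w (2 * (s + (d + 1))) ^ s) ^ (s + 1) := by
              calc (w (2 * s) ^ (s + (d + 1))) ^ (s + 1)
                  = (w (2 * s) ^ (s + 1)) ^ (s + (d + 1)) := by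
                    rw [← pow_mul, ← pow_mul, Nat.mul_comm (s + (d + 1)) (s + 1)]
                _ ≤ (n * w (2 * (s + 1)) ^ s) ^ (s + (d + 1)) :=
                    pow_le_pow_left₀ (pow_nonneg (hnn _) _) hPs _
                _ = n ^ (s + (d + 1)) * (w (2 * (s + 1)) ^ (s + (d + 1))) ^ s := by
                    rw [mul_pow, ← pow_mul, ← pow_mul, Nat.mul_comm s (s + (d + 1))]
                _ ≤ n ^ (s + (d + 1)) * (n ^ d * w (2 * ((s + 1) + d)) ^ (s + 1)) ^ s := by
                    refine mul_le_mul_of_nonneg_left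
                      (pow_le_pow_left₀ (pow_nonneg (hnn _) _) ?_ s) (pow_nonneg hn.le _)
                    rw [show s + 1 + d = s + (d + 1) by omega] at hIH ⊢
                    exact hIH
                _ = (n ^ (d + 1) * w (2 * (s + (d + 1))) ^ s) ^ (s + 1) := by
                    rw [show (s + 1) + d = s + (d + 1) by omega]
                    ring
            exact le_of_pow_le_pow_left₀ (by omega)
              (mul_nonneg (pow_nonneg hn.le _) (pow_nonneg (hnn _) _)) hkey
      -- derive hC
      rcases Nat.even_or_odd l with ⟨s, hs⟩ | ⟨s, hs⟩
      · -- l = 2s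
        have hseq : l = 2 * s := by omega
        have hst : s ≤ t := by omega
        have h1 := hM (t - s) s (by omega)
        rw [show s + (t - s) = t by omega] at h1
        have h2 : (w (2 * s) ^ t) ^ 2 ≤ (n ^ (t - s) * w (2 * t) ^ s) ^ 2 :=
          pow_le_pow_left₀ (pow_nonneg (hnn _) _) h1 2
        rw [← pow_mul, mul_pow, ← pow_mul, ← pow_mul] at h2
        rw [hseq]
        calc w (2 * s) ^ (2 * t) = w (2 * s) ^ (t * 2) := by rw [Nat.mul_comm 2 t]
          _ ≤ n ^ ((t - s) * 2) * w (2 * t) ^ (s * 2) := h2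
          _ = n ^ (2 * t - 2 * s) * w (2 * t) ^ (2 * s) := by
              congr 2 <;> omega
      · -- l = 2s+1
        have hseq : l = 2 * s + 1 := by omega
        have hst : s + 1 ≤ t := by omega
        have h1 := hM (t - s) s (by omega)
        rw [show s + (t - s) = t by omega] at h1
        have h2 := hM (t - (s + 1)) (s + 1) (by omega)
        rw [show (s + 1) + (t - (s + 1)) = t by omega] at h2
        have h3 := hcs s (s + 1)
        rw [show s + (s + 1) = l by omega] at h3
        have h4 : (w l ^ 2) ^ t ≤ (w (2 * s) * w (2 * (s + 1))) ^ t :=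
          pow_le_pow_left₀ (sq_nonneg _) h3 t
        rw [← pow_mul, mul_pow] at h4
        have h5 : w (2 * s) ^ t * w (2 * (s + 1)) ^ t
            ≤ (n ^ (t - s) * w (2 * t) ^ s) * (n ^ (t - (s + 1)) * w (2 * t) ^ (s + 1)) :=
          mul_le_mul h1 h2 (pow_nonneg (hnn _) _)
            (mul_nonneg (pow_nonneg hn.le _) (pow_nonneg (hnn _) _))
        calc w l ^ (2 * t) ≤ w (2 * s) ^ t * w (2 * (s + 1)) ^ t := h4
          _ ≤ (n ^ (t - s) * w (2 * t) ^ s) * (n ^ (t - (s + 1)) * w (2 * t) ^ (s + 1)) := h5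
          _ = n ^ ((t - s) + (t - (s + 1))) * w (2 * t) ^ (s + (s + 1)) := by
              rw [pow_add, pow_add]
              ring
          _ = n ^ (2 * t - l) * w (2 * t) ^ l := by
              congr 2 <;> omega
  -- conversion to rpow
  have hstep : (w l / n) ^ (2 * t) ≤ (w (2 * t) / n) ^ l := by
    rw [div_pow, div_pow, div_le_div_iff₀ (pow_pos hn _) (pow_pos hn _)]
    calc w l ^ (2 * t) * n ^ l ≤ (n ^ (2 * t - l) * w (2 * t) ^ l) * n ^ l :=
          mul_le_mul_of_nonneg_right hC (pow_nonneg hn.le _)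
      _ = w (2 * t) ^ l * n ^ (2 * t) := by
          rw [mul_comm (n ^ (2 * t - l)) (w (2 * t) ^ l), mul_assoc, ← pow_add,
            show 2 * t - l + l = 2 * t by omega]
  have hx : (0 : ℝ) ≤ w l / n := div_nonneg (hnn l) hn.le
  have hy : (0 : ℝ) ≤ w (2 * t) / n := div_nonneg (hnn _) hn.le
  have hlr : (0 : ℝ) < (l : ℝ) := by exact_mod_cast hl
  have hkr : (0 : ℝ) < ((2 * t : ℕ) : ℝ) := by exact_mod_cast (by omega : 0 < 2 * t)
  calc (w l / n) ^ ((1 : ℝ) / l)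
      = ((w l / n) ^ (2 * t : ℕ)) ^ ((1 : ℝ) / (((2 * t : ℕ) : ℝ) * l)) := by
        rw [← Real.rpow_natCast (w l / n) (2 * t), ← Real.rpow_mul hx]
        congr 1
        field_simp
    _ ≤ ((w (2 * t) / n) ^ (l : ℕ)) ^ ((1 : ℝ) / (((2 * t : ℕ) : ℝ) * l)) := by
        apply Real.rpow_le_rpow (by positivity) hstep (by positivity)
    _ = (w (2 * t) / n) ^ ((1 : ℝ) / (2 * t : ℕ)) := by
        rw [← Real.rpow_natCast (w (2 * t) / n) l, ← Real.rpow_mul hy]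
        congr 1
        field_simp

/-- Erdős–Simonovits: for `k > ℓ` with `k` even and any `n`-vertex graph `G`,
`(hom(P_{k+1},G)/n)^{1/k} ≥ (hom(P_{ℓ+1},G)/n)^{1/ℓ}`. -/
theorem hom_path_inequality {V : Type*} [Fintype V] (k l : ℕ) (hl : 0 < l) (hkl : l < k)
    (hk : Even k) (G : SimpleGraph V) (hn : 0 < Fintype.card V) :
    ((homPathCount G (l + 1) : ℝ) / (Fintype.card V)) ^ ((1 : ℝ) / l) ≤
      ((homPathCount G (k + 1) : ℝ) / (Fintype.card V)) ^ ((1 : ℝ) / k) := by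
  haveI := Classical.decEq V
  haveI : DecidableRel G.Adj := fun a b => Classical.propDecidable _
  obtain ⟨t, rfl⟩ : ∃ t, k = 2 * t := ⟨k / 2, by
    obtain ⟨r, hr⟩ := hk
    omega⟩
  have hentry : ∀ m (u v : V), 0 ≤ ((G.adjMatrix ℝ) ^ m) u v := by
    intro m
    induction m with
    | zero =>
        intro u v
        rw [pow_zero, Matrix.one_apply]
        split <;> norm_num
    | succ m ihm =>
        intro u v
        rw [pow_succ, Matrix.mul_apply]
        refine Finset.sum_nonneg fun i _ => mul_nonneg (ihm u i) ?_
        rw [SimpleGraph.adjMatrix_apply]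
        split <;> norm_num
  have hsym : ∀ m (u v : V), ((G.adjMatrix ℝ) ^ m) u v = ((G.adjMatrix ℝ) ^ m) v u := by
    intro m u v
    exact ((isSymm_adjMatrix (α := ℝ) (G := G)).pow m).apply v u
  have hdot : ∀ a b, (∑ u, ∑ v, ((G.adjMatrix ℝ) ^ (a + b)) u v)
      = ∑ i, (∑ u, ((G.adjMatrix ℝ) ^ a) u i) * (∑ u, ((G.adjMatrix ℝ) ^ b) u i) := by
    intro a b
    calc (∑ u, ∑ v, ((G.adjMatrix ℝ) ^ (a + b)) u v)
        = ∑ u, ∑ v, ∑ i, ((G.adjMatrix ℝ) ^ a) u i * ((G.adjMatrix ℝ) ^ b) i v := by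
          simp only [pow_add, Matrix.mul_apply]
      _ = ∑ i, ∑ u, ∑ v, ((G.adjMatrix ℝ) ^ a) u i * ((G.adjMatrix ℝ) ^ b) i v := by
          rw [Finset.sum_congr rfl fun u _ => Finset.sum_comm, Finset.sum_comm]
      _ = ∑ i, (∑ u, ((G.adjMatrix ℝ) ^ a) u i) * (∑ v, ((G.adjMatrix ℝ) ^ b) i v) := by
          refine Finset.sum_congr rfl fun i _ => ?_
          rw [Finset.sum_mul_sum]
      _ = ∑ i, (∑ u, ((G.adjMatrix ℝ) ^ a) u i) * (∑ u, ((G.adjMatrix ℝ) ^ b) u i) := by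
          refine Finset.sum_congr rfl fun i _ => ?_
          congr 1
          exact Finset.sum_congr rfl fun v _ => hsym b i v
  have key := moment_ineq (fun m => ∑ u, ∑ v, ((G.adjMatrix ℝ) ^ m) u v)
    (Fintype.card V : ℝ) (by exact_mod_cast hn)
    (by simp [Matrix.one_apply])
    (fun m => Finset.sum_nonneg fun u _ => Finset.sum_nonneg fun v _ => hentry m u v)
    (by
      intro a b
      rw [hdot a b]
      have h2a : (∑ u, ∑ v, ((G.adjMatrix ℝ) ^ (2 * a)) u v)
          = ∑ i, (∑ u, ((G.adjMatrix ℝ) ^ a) u i) ^ 2 := by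
        rw [show 2 * a = a + a by ring, hdot a a]
        exact Finset.sum_congr rfl fun i _ => (pow_two _).symm
      have h2b : (∑ u, ∑ v, ((G.adjMatrix ℝ) ^ (2 * b)) u v)
          = ∑ i, (∑ u, ((G.adjMatrix ℝ) ^ b) u i) ^ 2 := by
        rw [show 2 * b = b + b by ring, hdot b b]
        exact Finset.sum_congr rfl fun i _ => (pow_two _).symm
      rw [h2a, h2b]
      exact Finset.sum_mul_sq_le_sq_mul_sq _ _ _)
    l t hl hkl
  rw [homPathCount_cast G l, homPathCount_cast G (2 * t)]
  exact_mod_cast key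
end

section
/- Let k ≥ 1 be an odd integer and ℓ ≥ 2 an even integer. Let 𝒫 be a non-empty α-good collection of paths on 2k vertices in a graph G with α ≥ kℓ. Then G contains the honeycomb graph H_{k,ℓ} as a subgraph. -/
open SimpleGraph

/-- A collection `Ps` of labelled paths on `m` vertices is `α`-good if for every member
`x₁⋯x_m` and every internal position `i` (`2 ≤ i ≤ m-2`, here 0-indexed
`1 ≤ i ≤ m-3`), there are at least `α` pairwise disjoint edges `x_i'x_{i+1}'` of `G`
whose substitution yields another member of `Ps`. -/
def GoodPaths {V : Type*} [DecidableEq V] (G : SimpleGraph V) {m : ℕ} (α : ℕ)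
    (Ps : Set (Fin m → V)) : Prop :=
  ∀ p ∈ Ps, ∀ i : Fin m, 1 ≤ i.val → i.val + 2 < m →
    ∃ S : Finset (V × V), α ≤ S.card ∧
      (∀ e ∈ S, ∀ f ∈ S, e ≠ f → e.1 ≠ f.1 ∧ e.1 ≠ f.2 ∧ e.2 ≠ f.1 ∧ e.2 ≠ f.2) ∧
      ∀ e ∈ S, G.Adj e.1 e.2 ∧ ∃ hi : i.val + 1 < m,
        Function.update (Function.update p i e.1) ⟨i.val + 1, hi⟩ e.2 ∈ Ps

/-- `G` contains the honeycomb graph `H_{k,ℓ}` as a subgraph: there are vertices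
`x i j` (`0 ≤ i ≤ k-1`, `0 ≤ j ≤ ℓ-1`, 0-indexed version of the paper's
`x_{i+1,j+1}`), identified exactly along the last row at even columns and the first
row at odd columns, with the column edges `x i j — x i (j+1)` and the row edges
`x i j — x (i+1) j` for `i ≡ j (mod 2)`. -/
def ContainsHoneycomb {V : Type*} (G : SimpleGraph V) (k l : ℕ) : Prop :=
  ∃ x : Fin k → Fin l → V,
    (∀ i i' : Fin k, ∀ j j' : Fin l,
      i.val = k - 1 → i'.val = k - 1 → Even j.val → Even j'.val → x i j = x i' j') ∧
    (∀ i i' : Fin k, ∀ j j' : Fin l,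
      i.val = 0 → i'.val = 0 → Odd j.val → Odd j'.val → x i j = x i' j') ∧
    (∀ i i' : Fin k, ∀ j j' : Fin l, x i j = x i' j' → (i = i' ∧ j = j') ∨
      (i.val = k - 1 ∧ i'.val = k - 1 ∧ Even j.val ∧ Even j'.val) ∨
      (i.val = 0 ∧ i'.val = 0 ∧ Odd j.val ∧ Odd j'.val)) ∧
    (∀ i : Fin k, ∀ j : ℕ, (h : j + 1 < l) →
      G.Adj (x i ⟨j, by omega⟩) (x i ⟨j + 1, h⟩)) ∧
    (∀ i : ℕ, (h : i + 1 < k) → ∀ j : Fin l, i % 2 = j.val % 2 →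
      G.Adj (x ⟨i, by omega⟩ j) (x ⟨i + 1, h⟩ j))

namespace HoneycombAux

def off (c : ℕ) : ℕ := if c % 2 = 0 then 1 else 3

def Pp (b c x : ℕ) : Prop := ∃ t, t < b ∧ (x = off c + 4 * t ∨ x = off c + 4 * t + 1)

def posO (i : ℕ) : ℕ := if i % 2 = 0 then 2 * i else 2 * i + 1
def posE (i : ℕ) : ℕ := if i % 2 = 0 then 2 * i + 1 else 2 * i
def colPos (j i : ℕ) : ℕ := if j % 2 = 1 then posO i else posE i

lemma sub_lemma {V : Type*} [DecidableEq V] {G : SimpleGraph V} {m α : ℕ}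
    {Ps : Set (Fin m → V)} (hgood : GoodPaths G α Ps) {p : Fin m → V} (hp : p ∈ Ps)
    (i : ℕ) (h1 : 1 ≤ i) (h2 : i + 2 < m) (F : Finset V) (hF : F.card < α) :
    ∃ p' ∈ Ps, (∀ pos : Fin m, pos.val ≠ i → pos.val ≠ i + 1 → p' pos = p pos) ∧
      p' ⟨i, by omega⟩ ∉ F ∧ p' ⟨i + 1, by omega⟩ ∉ F := by
  obtain ⟨S, hcard, hdisj, hmem⟩ := hgood p hp ⟨i, by omega⟩ h1 h2
  have hsub : ∃ e ∈ S, e.1 ∉ F ∧ e.2 ∉ F := by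
    by_contra hcon
    push_neg at hcon
    have hST : S.card ≤ F.card := by
      apply Finset.card_le_card_of_injOn (fun e => if e.1 ∈ F then e.1 else e.2)
      · intro e he
        dsimp only
        split_ifs with hf1
        · exact hf1
        · exact hcon e he hf1
      · intro e he f hf heq
        by_contra hne
        obtain ⟨a1, a2, a3, a4⟩ := hdisj e (Finset.mem_coe.mp he) f (Finset.mem_coe.mp hf) hne
        dsimp only at heq
        split_ifs at heq
        · exact a1 heq
        · exact a2 heq
        · exact a3 heq
        · exact a4 heq
    omega
  obtain ⟨e, heS, he1, he2⟩ := hsub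
  obtain ⟨-, hi, hPs⟩ := hmem e heS
  refine ⟨_, hPs, ?_, ?_, ?_⟩
  · intro pos hp1 hp2
    rw [Function.update_of_ne (Fin.ne_of_val_ne hp2), Function.update_of_ne (Fin.ne_of_val_ne hp1)]
  · have hv : Function.update (Function.update p ⟨i, by omega⟩ e.1) ⟨i + 1, hi⟩ e.2 ⟨i, by omega⟩ = e.1 := by
      rw [Function.update_of_ne (Fin.ne_of_val_ne (show i ≠ i + 1 by omega)), Function.update_self]
    rw [hv]
    exact he1
  · have hv : Function.update (Function.update p ⟨i, by omega⟩ e.1) ⟨i + 1, hi⟩ e.2 ⟨i + 1, by omega⟩ = e.2 := by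
      rw [Function.update_self]
    rw [hv]
    exact he2

lemma round_lemma {V : Type*} [DecidableEq V] {G : SimpleGraph V} {k α : ℕ} {b : ℕ}
    (hk2 : k = 2 * b + 1) {Ps : Set (Fin (2 * k) → V)} (hgood : GoodPaths G α Ps)
    (c : ℕ) {q : Fin (2 * k) → V} (hq : q ∈ Ps) (F : Finset V) (hF : F.card < α) :
    ∃ q' ∈ Ps, (∀ pos : Fin (2 * k), ¬ Pp b c pos.val → q' pos = q pos) ∧
      (∀ pos : Fin (2 * k), Pp b c pos.val → q' pos ∉ F) := by
  have hoffb : off c = 1 ∨ off c = 3 := by unfold off; split_ifs <;> omega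
  have haux : ∀ m, m ≤ b → ∃ q' ∈ Ps, (∀ pos : Fin (2 * k), ¬ Pp m c pos.val → q' pos = q pos) ∧
      (∀ pos : Fin (2 * k), Pp m c pos.val → q' pos ∉ F) := by
    intro m
    induction m with
    | zero =>
      intro _
      exact ⟨q, hq, fun _ _ => rfl, fun pos hP => absurd hP (by rintro ⟨t, ht, _⟩; omega)⟩
    | succ m ih =>
      intro hm
      obtain ⟨q1, hq1, hA, hB⟩ := ih (by omega)
      obtain ⟨q2, hq2, hC, hD, hE⟩ := sub_lemma hgood hq1 (off c + 4 * m) (by omega) (by omega) F hF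
      refine ⟨q2, hq2, ?_, ?_⟩
      · intro pos hP
        have h1 : pos.val ≠ off c + 4 * m := fun e => hP ⟨m, by omega, Or.inl e⟩
        have h2 : pos.val ≠ off c + 4 * m + 1 := fun e => hP ⟨m, by omega, Or.inr e⟩
        rw [hC pos h1 h2]
        exact hA pos (fun hPP => by obtain ⟨t, ht, hx⟩ := hPP; exact hP ⟨t, by omega, hx⟩)
      · intro pos hP
        obtain ⟨t, ht, hx⟩ := hP
        rcases Nat.lt_succ_iff_lt_or_eq.mp ht with htm | rfl
        · have h1 : pos.val ≠ off c + 4 * m := by omega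
          have h2 : pos.val ≠ off c + 4 * m + 1 := by omega
          rw [hC pos h1 h2]
          exact hB pos ⟨t, htm, hx⟩
        · rcases hx with hx | hx
          · have hpe : pos = (⟨off c + 4 * t, by omega⟩ : Fin (2 * k)) := Fin.ext hx
            rw [hpe]
            exact hD
          · have hpe : pos = (⟨off c + 4 * t + 1, by omega⟩ : Fin (2 * k)) := Fin.ext hx
            rw [hpe]
            exact hE
  exact haux b le_rfl

end HoneycombAux

open HoneycombAux

/-- Let `k ≥ 1` be odd and `ℓ ≥ 2` even.  If `G` has a non-empty `α`-good collection of
paths on `2k` vertices with `α ≥ kℓ`, then `G` contains the honeycomb graph `H_{k,ℓ}`. -/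
theorem honeycomb_of_good_paths {V : Type*} [Fintype V] [DecidableEq V] (k l α : ℕ)
    (hk : Odd k) (hl : 2 ≤ l) (hle : Even l) (hα : k * l ≤ α) (G : SimpleGraph V)
    (Ps : Set (Fin (2 * k) → V)) (hne : Ps.Nonempty)
    (hpath : ∀ p ∈ Ps, IsPathIn G p)
    (hgood : GoodPaths G α Ps) :
    ContainsHoneycomb G k l := by
  classical
  obtain ⟨b, hk2⟩ := hk
  obtain ⟨lw, hlw⟩ := hle
  obtain ⟨p₀, hp₀⟩ := hne
  have hoff : ∀ s : ℕ, (s % 2 = 0 ∧ off s = 1) ∨ (s % 2 = 1 ∧ off s = 3) := by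
    intro s; unfold off; split_ifs <;> omega
  have hposO : ∀ iv : ℕ, (iv % 2 = 0 ∧ posO iv = 2 * iv) ∨ (iv % 2 = 1 ∧ posO iv = 2 * iv + 1) := by
    intro iv; unfold posO; split_ifs <;> omega
  have hcolPos : ∀ jv iv : ℕ, (jv % 2 = 1 ∧ iv % 2 = 0 ∧ colPos jv iv = 2 * iv) ∨
      (jv % 2 = 1 ∧ iv % 2 = 1 ∧ colPos jv iv = 2 * iv + 1) ∨
      (jv % 2 = 0 ∧ iv % 2 = 0 ∧ colPos jv iv = 2 * iv + 1) ∨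
      (jv % 2 = 0 ∧ iv % 2 = 1 ∧ colPos jv iv = 2 * iv) := by
    intro jv iv; unfold colPos posO posE; split_ifs <;> omega
  have hcol_lt : ∀ jv iv : ℕ, iv < k → colPos jv iv < 2 * k := by
    intro jv iv h
    have := hcolPos jv iv
    omega
  -- Construction of the sequence of snakes
  have Ind : ∀ N, N ≤ l - 2 → ∃ Q : ℕ → (Fin (2 * k) → V),
      (∀ c, c ≤ N → Q c ∈ Ps) ∧
      (∀ c, c < N → ∀ pos : Fin (2 * k), ¬ Pp b c pos.val → Q (c + 1) pos = Q c pos) ∧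
      (∀ c, c < N → ∀ pos : Fin (2 * k), Pp b c pos.val →
        ∀ c'', c'' ≤ c → ∀ pos'' : Fin (2 * k), Q (c + 1) pos ≠ Q c'' pos'') := by
    intro N
    induction N with
    | zero =>
      intro _
      exact ⟨fun _ => p₀, fun c _ => hp₀, fun c hc => absurd hc (by omega),
        fun c hc => absurd hc (by omega)⟩
    | succ N ih =>
      intro hN1
      obtain ⟨Q, hQ1, hQ2, hQ3⟩ := ih (by omega)
      set F : Finset V := (Finset.univ.image (Q 0)) ∪
        (Finset.range N).biUnion (fun c =>
          (Finset.univ.filter (fun pos : Fin (2 * k) => Pp b c pos.val)).image (Q (c + 1)))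
        with hFdef
      have hmemF : ∀ c, c ≤ N → ∀ pos : Fin (2 * k), Q c pos ∈ F := by
        intro c
        induction c with
        | zero =>
          intro _ pos
          exact Finset.mem_union_left _ (Finset.mem_image_of_mem _ (Finset.mem_univ pos))
        | succ c ihc =>
          intro hc pos
          by_cases hP : Pp b c pos.val
          · exact Finset.mem_union_right _ (Finset.mem_biUnion.mpr ⟨c, Finset.mem_range.mpr (by omega),
              Finset.mem_image_of_mem _ (Finset.mem_filter.mpr ⟨Finset.mem_univ _, hP⟩)⟩)
          · rw [hQ2 c (by omega) pos hP]
            exact ihc (by omega) pos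
      have hPpcard : ∀ c : ℕ,
          (Finset.univ.filter (fun pos : Fin (2 * k) => Pp b c pos.val)).card ≤ 2 * b := by
        intro c
        have hcc : (Finset.univ.filter (fun pos : Fin (2 * k) => Pp b c pos.val)).card ≤
            (Finset.range (2 * b)).card := by
          apply Finset.card_le_card_of_injOn (fun pos => (pos.val - off c + 1) / 2)
          · intro pos hpos
            obtain ⟨t, ht, hx⟩ := (Finset.mem_filter.mp hpos).2
            rw [Finset.mem_coe, Finset.mem_range]; dsimp only
            have hoffb : off c = 1 ∨ off c = 3 := by unfold off; split_ifs <;> omega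
            omega
          · intro pos hpos pos' hpos' heq
            rw [Finset.mem_coe, Finset.mem_filter] at hpos hpos'
            obtain ⟨t, ht, hx⟩ := hpos.2
            obtain ⟨t', ht', hx'⟩ := hpos'.2
            dsimp only at heq
            exact Fin.ext (by omega)
        simpa using hcc
      have hFcard : F.card < α := by
        have h1 : (Finset.univ.image (Q 0)).card ≤ 2 * k := Finset.card_image_le.trans (by simp)
        have h2 : ((Finset.range N).biUnion (fun c =>
            (Finset.univ.filter (fun pos : Fin (2 * k) => Pp b c pos.val)).image (Q (c + 1)))).card
            ≤ N * (2 * b) := by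
          refine Finset.card_biUnion_le.trans ?_
          refine le_trans (Finset.sum_le_sum (fun c _ => Finset.card_image_le.trans (hPpcard c))) ?_
          rw [Finset.sum_const, Finset.card_range, smul_eq_mul]
        have hb1 : F.card ≤ 2 * k + N * (2 * b) := by
          rw [hFdef]
          exact (Finset.card_union_le _ _).trans (Nat.add_le_add h1 h2)
        have hb2 : N * (2 * b) ≤ (l - 3) * (2 * b) := Nat.mul_le_mul_right _ (by omega)
        have h3 : 2 * k + (l - 3) * (2 * b) < k * l := by
          obtain ⟨l', hl'⟩ : ∃ l', l = l' + 3 := ⟨l - 3, by omega⟩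
          have e : l - 3 = l' := by omega
          rw [e, hl', hk2]
          have h4 : 2 * (2 * b + 1) < 6 * b + l' + 3 := by omega
          calc 2 * (2 * b + 1) + l' * (2 * b) < (6 * b + l' + 3) + l' * (2 * b) :=
                Nat.add_lt_add_right h4 _
            _ = (2 * b + 1) * (l' + 3) := by ring
        exact lt_of_le_of_lt (hb1.trans (Nat.add_le_add_left hb2 _)) (lt_of_lt_of_le h3 hα)
      obtain ⟨q', hq'1, hq'2, hq'3⟩ := round_lemma hk2 hgood N (hQ1 N le_rfl) F hFcard
      refine ⟨fun c => if c ≤ N then Q c else q', ?_, ?_, ?_⟩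
      · intro c hc
        dsimp only
        by_cases hcN : c ≤ N
        · rw [if_pos hcN]; exact hQ1 c hcN
        · rw [if_neg hcN]; exact hq'1
      · intro c hc pos hP
        dsimp only
        by_cases hcN : c < N
        · rw [if_pos (by omega : c + 1 ≤ N), if_pos (by omega : c ≤ N)]
          exact hQ2 c hcN pos hP
        · have hce : c = N := by omega
          subst hce
          rw [if_neg (by omega), if_pos le_rfl]
          exact hq'2 pos hP
      · intro c hc pos hP c'' hc'' pos''
        dsimp only
        by_cases hcN : c < N
        · rw [if_pos (by omega : c + 1 ≤ N), if_pos (by omega : c'' ≤ N)]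
          exact hQ3 c hcN pos hP c'' hc'' pos''
        · have hce : c = N := by omega
          subst hce
          rw [if_neg (by omega), if_pos (by omega)]
          intro heq
          exact hq'3 pos hP (by rw [heq]; exact hmemF c'' hc'' pos'')
  obtain ⟨Q, hQ1, hQ2, hQ3⟩ := Ind (l - 2) le_rfl
  have hQinj : ∀ c, c ≤ l - 2 → Function.Injective (Q c) :=
    fun c hc => (hpath _ (hQ1 c hc)).1
  have hQadj' : ∀ c, c ≤ l - 2 → ∀ p1 p2 : Fin (2 * k), p1.val + 1 = p2.val →
      G.Adj (Q c p1) (Q c p2) := by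
    intro c hc p1 p2 hpp
    obtain ⟨v1, hv1⟩ := p1
    obtain ⟨v2, hv2⟩ := p2
    have hv : v1 + 1 = v2 := hpp
    subst hv
    exact (hpath _ (hQ1 c hc)).2 v1 hv2
  have hpersist : ∀ d c, c + d ≤ l - 2 → ∀ pos : Fin (2 * k),
      (∀ s, c ≤ s → s < c + d → ¬ Pp b s pos.val) → Q (c + d) pos = Q c pos := by
    intro d
    induction d with
    | zero => intro c _ pos _; rfl
    | succ d ihd =>
      intro c hc pos hs
      have h1 : Q (c + d + 1) pos = Q (c + d) pos :=
        hQ2 (c + d) (by omega) pos (hs (c + d) (by omega) (by omega))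
      calc Q (c + (d + 1)) pos = Q (c + d) pos := h1
        _ = Q c pos := ihd c (by omega) pos (fun s a bnd => hs s a (by omega))
  have hfresh : ∀ c', c' ≤ l - 2 → ∀ c, c < c' → ∀ pos : Fin (2 * k),
      (∃ s, c ≤ s ∧ s < c' ∧ Pp b s pos.val) → ∀ pos2 : Fin (2 * k), Q c' pos ≠ Q c pos2 := by
    intro c'
    induction c' with
    | zero => intro _ c hc; exact absurd hc (by omega)
    | succ m ihm =>
      intro hm c hc pos hex pos2
      obtain ⟨s, hs1, hs2, hs3⟩ := hex
      by_cases hPm : Pp b m pos.val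
      · exact hQ3 m (by omega) pos hPm c (by omega) pos2
      · rw [hQ2 m (by omega) pos hPm]
        have hsm : s < m := by
          rcases Nat.lt_succ_iff_lt_or_eq.mp hs2 with hh | hh
          · exact hh
          · exact absurd (hh ▸ hs3) hPm
        exact ihm (by omega) c (by omega) pos ⟨s, hs1, hsm, hs3⟩ pos2
  have keyC : ∀ c c', c ≤ c' → c' ≤ l - 2 → ∀ pos pos' : Fin (2 * k), Q c pos = Q c' pos' →
      pos = pos' ∧ (∀ s, c ≤ s → s < c' → ¬ Pp b s pos.val) := by
    intro c c' hcc hc' pos pos' heq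
    rcases hcc.lt_or_eq with hlt | hee
    · have hnofresh : ∀ s, c ≤ s → s < c' → ¬ Pp b s pos'.val :=
        fun s hs1 hs2 hP => hfresh c' hc' c hlt pos' ⟨s, hs1, hs2, hP⟩ pos heq.symm
      have hpe : Q c' pos' = Q c pos' := by
        have hh := hpersist (c' - c) c (by omega) pos' (fun s hs1 hs2 => hnofresh s hs1 (by omega))
        rwa [show c + (c' - c) = c' by omega] at hh
      have hpp : pos = pos' := hQinj c (by omega) (heq.trans hpe)
      exact ⟨hpp, by subst hpp; exact hnofresh⟩
    · subst hee
      exact ⟨hQinj c hc' heq, by intro s hs1 hs2 _; omega⟩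
  have hnoPp0 : ∀ s, ¬ Pp b s 0 := by
    rintro s ⟨t, ht, hx⟩
    have := hoff s
    omega
  have hnoPpLast : ∀ s, ¬ Pp b s (2 * k - 1) := by
    rintro s ⟨t, ht, hx⟩
    have := hoff s
    omega
  have hconst : ∀ (a : ℕ) (ha : a < 2 * k), (∀ s, ¬ Pp b s a) → ∀ c, c ≤ l - 2 →
      Q c ⟨a, ha⟩ = Q 0 ⟨a, ha⟩ := by
    intro a ha hs c hc
    have h0 := hpersist c 0 (by omega) ⟨a, ha⟩ (fun s _ _ => hs s)
    rwa [Nat.zero_add] at h0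
  have hcover2 : ∀ s x : ℕ, 1 ≤ x → x ≤ 4 * b → Pp b s x ∨ Pp b (s + 1) x := by
    intro s x h1 h2
    by_cases hx : x % 4 = 1 ∨ x % 4 = 2
    · have hmk : ∀ s', s' % 2 = 0 → Pp b s' x := by
        intro s' hs'
        refine ⟨x / 4, by omega, ?_⟩
        have := hoff s'
        omega
      by_cases hs : s % 2 = 0
      · exact Or.inl (hmk s hs)
      · exact Or.inr (hmk (s + 1) (by omega))
    · have hmk : ∀ s', s' % 2 = 1 → Pp b s' x := by
        intro s' hs'
        refine ⟨(x - 3) / 4, by omega, ?_⟩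
        have := hoff s'
        omega
      by_cases hs : s % 2 = 1
      · exact Or.inl (hmk s hs)
      · exact Or.inr (hmk (s + 1) (by omega))
  have hposOP : ∀ s : ℕ, s % 2 = 1 → ∀ iv : ℕ, iv < k → posO iv = 0 ∨ Pp b s (posO iv) := by
    intro s hs iv hiv
    by_cases h0 : iv = 0
    · left
      subst h0
      have := hposO 0
      omega
    · right
      by_cases h2 : iv % 2 = 0
      · refine ⟨iv / 2 - 1, by omega, ?_⟩
        have := hoff s
        have := hposO iv
        omega
      · refine ⟨(iv - 1) / 2, by omega, ?_⟩
        have := hoff s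
        have := hposO iv
        omega
  have hzero : ∀ jv iv : ℕ, iv < k → colPos jv iv = 0 → jv % 2 = 1 ∧ iv = 0 := by
    intro jv iv hiv hc
    have := hcolPos jv iv
    omega
  have hlast : ∀ jv iv : ℕ, iv < k → colPos jv iv = 2 * k - 1 → jv % 2 = 0 ∧ iv = k - 1 := by
    intro jv iv hiv hc
    have := hcolPos jv iv
    omega
  obtain ⟨f, hfdef⟩ : ∃ f : Fin k → Fin l → V, f = fun i j =>
      Q (min j.val (l - 2)) ⟨colPos j.val i.val, hcol_lt j.val i.val i.isLt⟩ := ⟨_, rfl⟩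
  have hfa : ∀ (i : Fin k) (j : Fin l), f i j =
      Q (min j.val (l - 2)) ⟨colPos j.val i.val, hcol_lt j.val i.val i.isLt⟩ := by
    intro i j; rw [hfdef]
  have hfa2 : ∀ (i : Fin k) (jv : ℕ) (hjv : jv < l), f i ⟨jv, hjv⟩ =
      Q (min jv (l - 2)) ⟨colPos jv i.val, hcol_lt jv i.val i.isLt⟩ := by
    intro i jv hjv; rw [hfdef]
  have hfa3 : ∀ (iv : ℕ) (hiv : iv < k) (j : Fin l), f ⟨iv, hiv⟩ j =
      Q (min j.val (l - 2)) ⟨colPos j.val iv, hcol_lt j.val iv hiv⟩ := by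
    intro iv hiv j; rw [hfdef]
  have haux1 : ∀ (i : Fin k) (j : Fin l), i.val = k - 1 → Even j.val →
      f i j = Q 0 ⟨2 * k - 1, by omega⟩ := by
    intro i j hi hj
    rw [Nat.even_iff] at hj
    have e : colPos j.val i.val = 2 * k - 1 := by
      have := hcolPos j.val i.val
      omega
    rw [hfa i j]
    have e2 : (⟨colPos j.val i.val, hcol_lt j.val i.val i.isLt⟩ : Fin (2 * k)) =
        ⟨2 * k - 1, by omega⟩ := Fin.ext e
    rw [e2]
    exact hconst (2 * k - 1) (by omega) hnoPpLast _ (by omega)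
  have haux2 : ∀ (i : Fin k) (j : Fin l), i.val = 0 → Odd j.val →
      f i j = Q 0 ⟨0, by omega⟩ := by
    intro i j hi hj
    rw [Nat.odd_iff] at hj
    have e : colPos j.val i.val = 0 := by
      have := hcolPos j.val i.val
      omega
    rw [hfa i j]
    have e2 : (⟨colPos j.val i.val, hcol_lt j.val i.val i.isLt⟩ : Fin (2 * k)) =
        ⟨0, by omega⟩ := Fin.ext e
    rw [e2]
    exact hconst 0 (by omega) hnoPp0 _ (by omega)
  have goal1 : ∀ i i' : Fin k, ∀ j j' : Fin l,
      i.val = k - 1 → i'.val = k - 1 → Even j.val → Even j'.val → f i j = f i' j' := by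
    intro i i' j j' h1 h2 h3 h4
    rw [haux1 i j h1 h3, haux1 i' j' h2 h4]
  have goal2 : ∀ i i' : Fin k, ∀ j j' : Fin l,
      i.val = 0 → i'.val = 0 → Odd j.val → Odd j'.val → f i j = f i' j' := by
    intro i i' j j' h1 h2 h3 h4
    rw [haux2 i j h1 h3, haux2 i' j' h2 h4]
  have main : ∀ (i i' : Fin k) (j j' : Fin l), j.val ≤ j'.val → f i j = f i' j' →
      ((i = i' ∧ j = j') ∨ (i.val = k - 1 ∧ i'.val = k - 1 ∧ Even j.val ∧ Even j'.val) ∨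
        (i.val = 0 ∧ i'.val = 0 ∧ Odd j.val ∧ Odd j'.val)) := by
    intro i i' j j' hjj heq
    rw [hfa i j, hfa i' j'] at heq
    have hjl1 := j.isLt
    have hjl2 := j'.isLt
    obtain ⟨hpos, hnp0⟩ := keyC (min j.val (l - 2)) (min j'.val (l - 2)) (by omega) (by omega)
      _ _ heq
    have hnp : ∀ s, min j.val (l - 2) ≤ s → s < min j'.val (l - 2) →
        ¬ Pp b s (colPos j.val i.val) := fun s a bb hP => hnp0 s a bb hP
    have hpv : colPos j.val i.val = colPos j'.val i'.val := congrArg Fin.val hpos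
    have hiv : i.val = i'.val ∧ j.val % 2 = j'.val % 2 := by
      have := hcolPos j.val i.val
      have := hcolPos j'.val i'.val
      omega
    by_cases hje : j = j'
    · exact Or.inl ⟨Fin.ext hiv.1, hje⟩
    · have hjne : j.val ≠ j'.val := fun e => hje (Fin.ext e)
      have hjlt : j.val + 2 ≤ j'.val := by
        have := hiv.2
        omega
      have hkey : colPos j.val i.val = 0 ∨ colPos j.val i.val = 2 * k - 1 := by
        by_cases hc2 : min j.val (l - 2) + 2 ≤ min j'.val (l - 2)
        · by_contra hcon
          push_neg at hcon
          obtain ⟨hc0, hcL⟩ := hcon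
          have hclt := hcol_lt j.val i.val i.isLt
          rcases hcover2 (min j.val (l - 2)) (colPos j.val i.val) (by omega) (by omega) with hP | hP
          · exact hnp _ le_rfl (by omega) hP
          · exact hnp _ (by omega) (by omega) hP
        · left
          have hcs : j.val = l - 3 ∧ j'.val = l - 1 ∧ min j.val (l - 2) = l - 3 ∧
              min j'.val (l - 2) = l - 2 := by omega
          have hjodd : j.val % 2 = 1 := by omega
          by_contra h0
          apply hnp (l - 3) (by omega) (by omega)
          have hcc2 : colPos j.val i.val = posO i.val := by
            have := hcolPos j.val i.val
            have := hposO i.val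
            omega
          rcases hposOP (l - 3) (by omega) i.val i.isLt with hz | hPz
          · exact absurd (hcc2.trans hz) h0
          · rw [hcc2]; exact hPz
      rcases hkey with h0 | hL
      · right; right
        have ha := hzero j.val i.val i.isLt h0
        have hb' := hzero j'.val i'.val i'.isLt (by rw [← hpv]; exact h0)
        exact ⟨ha.2, hb'.2, Nat.odd_iff.mpr ha.1, Nat.odd_iff.mpr hb'.1⟩
      · right; left
        have ha := hlast j.val i.val i.isLt hL
        have hb' := hlast j'.val i'.val i'.isLt (by rw [← hpv]; exact hL)
        exact ⟨ha.2, hb'.2, Nat.even_iff.mpr ha.1, Nat.even_iff.mpr hb'.1⟩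
  have goal3 : ∀ i i' : Fin k, ∀ j j' : Fin l, f i j = f i' j' →
      ((i = i' ∧ j = j') ∨ (i.val = k - 1 ∧ i'.val = k - 1 ∧ Even j.val ∧ Even j'.val) ∨
        (i.val = 0 ∧ i'.val = 0 ∧ Odd j.val ∧ Odd j'.val)) := by
    intro i i' j j' heq
    rcases le_total j.val j'.val with hjj | hjj
    · exact main i i' j j' hjj heq
    · rcases main i' i j' j hjj heq.symm with ⟨e1, e2⟩ | ⟨a1, a2, a3, a4⟩ | ⟨a1, a2, a3, a4⟩
      · exact Or.inl ⟨e1.symm, e2.symm⟩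
      · exact Or.inr (Or.inl ⟨a2, a1, a4, a3⟩)
      · exact Or.inr (Or.inr ⟨a2, a1, a4, a3⟩)
  have goal4 : ∀ i : Fin k, ∀ jn : ℕ, (hj : jn + 1 < l) →
      G.Adj (f i ⟨jn, by omega⟩) (f i ⟨jn + 1, hj⟩) := by
    intro i jn hj
    rw [hfa2 i jn (by omega), hfa2 i (jn + 1) hj]
    have hminA : min jn (l - 2) = jn := by omega
    have hstep : Q (min (jn + 1) (l - 2)) (⟨colPos (jn + 1) i.val, hcol_lt (jn + 1) i.val i.isLt⟩)
        = Q jn ⟨colPos (jn + 1) i.val, hcol_lt (jn + 1) i.val i.isLt⟩ := by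
      by_cases hcase : jn + 1 ≤ l - 2
      · rw [min_eq_left hcase]
        apply hQ2 jn (by omega)
        intro hP
        obtain ⟨t, ht, hx⟩ := hP
        have hx' : colPos (jn + 1) i.val = off jn + 4 * t ∨
            colPos (jn + 1) i.val = off jn + 4 * t + 1 := hx
        have hil := i.isLt
        have := hcolPos (jn + 1) i.val
        have := hoff jn
        omega
      · rw [show min (jn + 1) (l - 2) = jn by omega]
    rw [hminA, hstep]
    have horient : (colPos jn i.val = 2 * i.val ∧ colPos (jn + 1) i.val = 2 * i.val + 1) ∨
        (colPos jn i.val = 2 * i.val + 1 ∧ colPos (jn + 1) i.val = 2 * i.val) := by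
      have := hcolPos jn i.val
      have := hcolPos (jn + 1) i.val
      omega
    rcases horient with ⟨ea, eb⟩ | ⟨ea, eb⟩
    · exact hQadj' jn (by omega) _ _ (by show colPos jn i.val + 1 = colPos (jn + 1) i.val; omega)
    · exact (hQadj' jn (by omega) _ _
        (by show colPos (jn + 1) i.val + 1 = colPos jn i.val; omega)).symm
  have goal5 : ∀ iv : ℕ, (hi : iv + 1 < k) → ∀ j : Fin l, iv % 2 = j.val % 2 →
      G.Adj (f ⟨iv, by omega⟩ j) (f ⟨iv + 1, hi⟩ j) := by
    intro iv hi j hpar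
    rw [hfa3 iv (by omega) j, hfa3 (iv + 1) hi j]
    have hjl := j.isLt
    apply hQadj' (min j.val (l - 2)) (by omega)
    show colPos j.val iv + 1 = colPos j.val (iv + 1)
    have := hcolPos j.val iv
    have := hcolPos j.val (iv + 1)
    omega
  unfold ContainsHoneycomb
  exact ⟨f, goal1, goal2, goal3, goal4, goal5⟩
end

section
/- Let ℓ ≥ 2 and let G be a graph with average degree d and maximum degree at most Kd. Fix disjoint edges x_{i−1}y_{i−1} and x_{i+1}y_{i+1} of G such that the 4-tuple (x_{i−1}, y_{i−1}, x_{i+1}, y_{i+1}) is not rich. Then the total weight of copies of P₃□K₂ formed by vertices x_{i−1}, y_{i−1}, x_i, y_i, x_{i+1}, y_{i+1} (over all choices of the edge x_i y_i with x_{i−1}x_i, x_i x_{i+1}, y_{i−1}y_i, y_i y_{i+1} ∈ E(G)) is at most 8ℓ, where each such copy has weight (max(d(x_{i−1}, y_i), d²/n) · max(d(x_i, y_{i+1}), d²/n))^{−1}. -/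
open SimpleGraph

/-- A 4-tuple `(w, z, w', z')` of distinct vertices is rich if `wz, w'z' ∈ E(G)` and
there are at least `4ℓ` pairwise vertex-disjoint edges `xy` with
`wx, xw', zy, yz' ∈ E(G)`. -/
def RichTuple {V : Type*} (G : SimpleGraph V) (l : ℕ) (w z w' z' : V) : Prop :=
  w ≠ z ∧ w ≠ w' ∧ w ≠ z' ∧ z ≠ w' ∧ z ≠ z' ∧ w' ≠ z' ∧
  G.Adj w z ∧ G.Adj w' z' ∧
  ∃ S : Finset (V × V), 4 * l ≤ S.card ∧
    (∀ e ∈ S, ∀ f ∈ S, e ≠ f → e.1 ≠ f.1 ∧ e.1 ≠ f.2 ∧ e.2 ≠ f.1 ∧ e.2 ≠ f.2) ∧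
    ∀ e ∈ S, G.Adj e.1 e.2 ∧ G.Adj w e.1 ∧ G.Adj e.1 w' ∧ G.Adj z e.2 ∧ G.Adj e.2 z'

lemma two_le_codeg {n : ℕ} (G : SimpleGraph (Fin n)) {u v x y : Fin n}
    (hux : G.Adj u x) (hvx : G.Adj v x) (huy : G.Adj u y) (hvy : G.Adj v y) (hxy : x ≠ y) :
    2 ≤ codeg G u v := by
  have h : 1 < (G.neighborSet u ∩ G.neighborSet v).ncard := by
    rw [Set.one_lt_ncard (Set.toFinite _)]
    exact ⟨x, ⟨hux, hvx⟩, y, ⟨huy, hvy⟩, hxy⟩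
  show 2 ≤ (G.neighborSet u ∩ G.neighborSet v).ncard
  omega

noncomputable def wfun {n : ℕ} (G : SimpleGraph (Fin n)) (a b' : Fin n) (D : ℝ) :
    Fin n × Fin n → ℝ := fun p =>
  (max (codeg G a p.2 : ℝ) D * max (codeg G p.1 b' : ℝ) D)⁻¹

lemma wfun_nonneg {n : ℕ} (G : SimpleGraph (Fin n)) (a b' : Fin n) {D : ℝ} (hD0 : 0 ≤ D)
    (p : Fin n × Fin n) : 0 ≤ wfun G a b' D p := by
  have h1 : 0 ≤ max (codeg G a p.2 : ℝ) D := le_trans hD0 (le_max_right _ _)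
  have h2 : 0 ≤ max (codeg G p.1 b' : ℝ) D := le_trans hD0 (le_max_right _ _)
  exact inv_nonneg.mpr (mul_nonneg h1 h2)

lemma roleA_aux {n : ℕ} (G : SimpleGraph (Fin n)) {a b a' b' : Fin n} {D : ℝ} (hD0 : 0 ≤ D)
    (hab : G.Adj a b) (hab' : G.Adj a' b')
    (F : Finset (Fin n × Fin n))
    (hF : ∀ p ∈ F, G.Adj p.1 p.2 ∧ G.Adj a p.1 ∧ G.Adj p.1 a' ∧ G.Adj b p.2 ∧ G.Adj p.2 b'
      ∧ p.1 ≠ b ∧ p.2 ≠ a')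
    (v : Fin n) :
    ∑ p ∈ F.filter (fun p => p.1 = v), wfun G a b' D p ≤ 1 / 2 := by
  classical
  set A := F.filter (fun p => p.1 = v) with hAdef
  rcases A.eq_empty_or_nonempty with h | ⟨p0, hp0⟩
  · rw [h, Finset.sum_empty]; norm_num
  · obtain ⟨hp0F, hp0v⟩ := Finset.mem_filter.mp hp0
    obtain ⟨hadj, _, ha', _, hb', _, hnea'⟩ := hF p0 hp0F
    have hc2 : 2 ≤ codeg G v b' :=
      two_le_codeg G (hp0v ▸ hadj) hb'.symm (hp0v ▸ ha') hab'.symm hnea'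
    have hc2' : (2:ℝ) ≤ (codeg G v b' : ℝ) := by exact_mod_cast hc2
    have hcpos : (0:ℝ) < (codeg G v b' : ℝ) := by linarith
    have hmaxpos : (0:ℝ) < max (codeg G v b' : ℝ) D := lt_of_lt_of_le hcpos (le_max_left _ _)
    -- cardinality bound
    have hcard : A.card ≤ codeg G v b' := by
      have heq : codeg G v b'
          = (Set.toFinite (G.neighborSet v ∩ G.neighborSet b')).toFinset.card :=
        Set.ncard_eq_toFinset_card _ _
      rw [heq]
      apply Finset.card_le_card_of_injOn Prod.snd
      · intro p hp
        obtain ⟨hpF, hpv⟩ := Finset.mem_filter.mp hp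
        obtain ⟨qadj, _, _, _, qb', _, _⟩ := hF p hpF
        rw [Finset.mem_coe, Set.Finite.mem_toFinset]
        exact ⟨hpv ▸ qadj, qb'.symm⟩
      · intro p hp q hq hpq
        obtain ⟨_, hpv⟩ := Finset.mem_filter.mp hp
        obtain ⟨_, hqv⟩ := Finset.mem_filter.mp hq
        exact Prod.ext (hpv.trans hqv.symm) hpq
    have hbound : ∀ p ∈ A, wfun G a b' D p ≤ (2 * max (codeg G v b' : ℝ) D)⁻¹ := by
      intro p hp
      obtain ⟨hpF, hpv⟩ := Finset.mem_filter.mp hp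
      obtain ⟨qadj, qaf, _, qb, _, qneb, _⟩ := hF p hpF
      have h2n : 2 ≤ codeg G a p.2 := two_le_codeg G qaf qadj.symm hab qb.symm qneb
      have h2 : (2:ℝ) ≤ max (codeg G a p.2 : ℝ) D := by
        have : (2:ℝ) ≤ (codeg G a p.2 : ℝ) := by exact_mod_cast h2n
        exact le_trans this (le_max_left _ _)
      show (max (codeg G a p.2 : ℝ) D * max (codeg G p.1 b' : ℝ) D)⁻¹ ≤ _
      rw [hpv]
      apply inv_anti₀ (mul_pos two_pos hmaxpos)
      exact mul_le_mul_of_nonneg_right h2 (le_of_lt hmaxpos)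
    calc ∑ p ∈ A, wfun G a b' D p
        ≤ A.card • (2 * max (codeg G v b' : ℝ) D)⁻¹ :=
          Finset.sum_le_card_nsmul _ _ _ hbound
      _ = (A.card : ℝ) * (2 * max (codeg G v b' : ℝ) D)⁻¹ := nsmul_eq_mul _ _
      _ ≤ (codeg G v b' : ℝ) * (2 * max (codeg G v b' : ℝ) D)⁻¹ := by
          apply mul_le_mul_of_nonneg_right _ (inv_nonneg.mpr (by positivity))
          exact_mod_cast hcard
      _ ≤ (codeg G v b' : ℝ) * (2 * (codeg G v b' : ℝ))⁻¹ := by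
          apply mul_le_mul_of_nonneg_left _ (le_of_lt hcpos)
          exact inv_anti₀ (by linarith)
            (mul_le_mul_of_nonneg_left (le_max_left _ _) (by norm_num))
      _ = 1 / 2 := by
          field_simp

lemma roleB_aux {n : ℕ} (G : SimpleGraph (Fin n)) {a b a' b' : Fin n} {D : ℝ} (hD0 : 0 ≤ D)
    (hab : G.Adj a b) (hab' : G.Adj a' b')
    (F : Finset (Fin n × Fin n))
    (hF : ∀ p ∈ F, G.Adj p.1 p.2 ∧ G.Adj a p.1 ∧ G.Adj p.1 a' ∧ G.Adj b p.2 ∧ G.Adj p.2 b'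
      ∧ p.1 ≠ b ∧ p.2 ≠ a')
    (v : Fin n) :
    ∑ p ∈ F.filter (fun p => p.2 = v), wfun G a b' D p ≤ 1 / 2 := by
  classical
  set A := F.filter (fun p => p.2 = v) with hAdef
  rcases A.eq_empty_or_nonempty with h | ⟨p0, hp0⟩
  · rw [h, Finset.sum_empty]; norm_num
  · obtain ⟨hp0F, hp0v⟩ := Finset.mem_filter.mp hp0
    obtain ⟨hadj, haf, _, hb, _, hneb, _⟩ := hF p0 hp0F
    have hc2 : 2 ≤ codeg G a v :=
      two_le_codeg G haf (hp0v ▸ hadj.symm) hab (hp0v ▸ hb.symm) hneb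
    have hc2' : (2:ℝ) ≤ (codeg G a v : ℝ) := by exact_mod_cast hc2
    have hcpos : (0:ℝ) < (codeg G a v : ℝ) := by linarith
    have hmaxpos : (0:ℝ) < max (codeg G a v : ℝ) D := lt_of_lt_of_le hcpos (le_max_left _ _)
    have hcard : A.card ≤ codeg G a v := by
      have heq : codeg G a v
          = (Set.toFinite (G.neighborSet a ∩ G.neighborSet v)).toFinset.card :=
        Set.ncard_eq_toFinset_card _ _
      rw [heq]
      apply Finset.card_le_card_of_injOn Prod.fst
      · intro p hp
        obtain ⟨hpF, hpv⟩ := Finset.mem_filter.mp hp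
        obtain ⟨qadj, qaf, _, _, _, _, _⟩ := hF p hpF
        rw [Finset.mem_coe, Set.Finite.mem_toFinset]
        exact ⟨qaf, hpv ▸ qadj.symm⟩
      · intro p hp q hq hpq
        obtain ⟨_, hpv⟩ := Finset.mem_filter.mp hp
        obtain ⟨_, hqv⟩ := Finset.mem_filter.mp hq
        exact Prod.ext hpq (hpv.trans hqv.symm)
    have hbound : ∀ p ∈ A, wfun G a b' D p ≤ (max (codeg G a v : ℝ) D * 2)⁻¹ := by
      intro p hp
      obtain ⟨hpF, hpv⟩ := Finset.mem_filter.mp hp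
      obtain ⟨qadj, _, qa', _, qb', _, qnea'⟩ := hF p hpF
      have h2n : 2 ≤ codeg G p.1 b' := two_le_codeg G qadj qb'.symm qa' hab'.symm qnea'
      have h2 : (2:ℝ) ≤ max (codeg G p.1 b' : ℝ) D := by
        have : (2:ℝ) ≤ (codeg G p.1 b' : ℝ) := by exact_mod_cast h2n
        exact le_trans this (le_max_left _ _)
      show (max (codeg G a p.2 : ℝ) D * max (codeg G p.1 b' : ℝ) D)⁻¹ ≤ _
      rw [hpv]
      apply inv_anti₀ (mul_pos hmaxpos two_pos)
      exact mul_le_mul_of_nonneg_left h2 (le_of_lt hmaxpos)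
    calc ∑ p ∈ A, wfun G a b' D p
        ≤ A.card • (max (codeg G a v : ℝ) D * 2)⁻¹ :=
          Finset.sum_le_card_nsmul _ _ _ hbound
      _ = (A.card : ℝ) * (max (codeg G a v : ℝ) D * 2)⁻¹ := nsmul_eq_mul _ _
      _ ≤ (codeg G a v : ℝ) * (max (codeg G a v : ℝ) D * 2)⁻¹ := by
          apply mul_le_mul_of_nonneg_right _ (inv_nonneg.mpr (by positivity))
          exact_mod_cast hcard
      _ ≤ (codeg G a v : ℝ) * ((codeg G a v : ℝ) * 2)⁻¹ := by
          apply mul_le_mul_of_nonneg_left _ (le_of_lt hcpos)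
          exact inv_anti₀ (by linarith)
            (mul_le_mul_of_nonneg_right (le_max_left _ _) (by norm_num))
      _ = 1 / 2 := by
          field_simp

/-- Let `ℓ ≥ 2`, and let `G` be an `n`-vertex graph of average degree `d` with maximum
degree at most `Kd`.  If `a b` (playing the role of `x_{i-1} y_{i-1}`) and `a' b'`
(`x_{i+1} y_{i+1}`) are disjoint edges such that `(a, b, a', b')` is not rich, then the
total weight of copies of `P₃□K₂` formed by `a, b, x, y, a', b'` over all choices of the
middle edge `x y` is at most `8ℓ`, where such a copy has weight
`(max(d(a,y), d²/n) · max(d(x,b'), d²/n))⁻¹`. -/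
theorem weight_nonrich_extensions {n : ℕ} (l : ℕ) (hl : 2 ≤ l) (K : ℝ)
    (G : SimpleGraph (Fin n))
    (hdeg : ∀ v, ((G.neighborSet v).ncard : ℝ) ≤
      K * (2 * (G.edgeSet.ncard : ℝ) / n))
    (a b a' b' : Fin n) (hab : G.Adj a b) (hab' : G.Adj a' b')
    (h1 : a ≠ a') (h2 : a ≠ b') (h3 : b ≠ a') (h4 : b ≠ b')
    (hnotrich : ¬ RichTuple G l a b a' b') :
    ∑ᶠ p ∈ {p : Fin n × Fin n |
        G.Adj p.1 p.2 ∧ G.Adj a p.1 ∧ G.Adj p.1 a' ∧ G.Adj b p.2 ∧ G.Adj p.2 b' ∧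
        p.1 ≠ a ∧ p.1 ≠ b ∧ p.1 ≠ a' ∧ p.1 ≠ b' ∧
        p.2 ≠ a ∧ p.2 ≠ b ∧ p.2 ≠ a' ∧ p.2 ≠ b'},
      (max (codeg G a p.2 : ℝ) ((2 * (G.edgeSet.ncard : ℝ) / n) ^ 2 / n) *
        max (codeg G p.1 b' : ℝ) ((2 * (G.edgeSet.ncard : ℝ) / n) ^ 2 / n))⁻¹ ≤
      8 * l := by
  classical
  set D : ℝ := (2 * (G.edgeSet.ncard : ℝ) / n) ^ 2 / n with hDdef
  have hD0 : 0 ≤ D := by positivity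
  have hP : ({p : Fin n × Fin n |
      G.Adj p.1 p.2 ∧ G.Adj a p.1 ∧ G.Adj p.1 a' ∧ G.Adj b p.2 ∧ G.Adj p.2 b' ∧
      p.1 ≠ a ∧ p.1 ≠ b ∧ p.1 ≠ a' ∧ p.1 ≠ b' ∧
      p.2 ≠ a ∧ p.2 ≠ b ∧ p.2 ≠ a' ∧ p.2 ≠ b'}).Finite := Set.toFinite _
  rw [← Set.Finite.coe_toFinset hP, finsum_mem_coe_finset]
  set F := hP.toFinset with hFdef
  show ∑ p ∈ F, wfun G a b' D p ≤ 8 * l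
  have hFmem : ∀ p ∈ F, G.Adj p.1 p.2 ∧ G.Adj a p.1 ∧ G.Adj p.1 a' ∧ G.Adj b p.2 ∧
      G.Adj p.2 b' ∧ p.1 ≠ b ∧ p.2 ≠ a' := by
    intro p hp
    rw [hFdef, Set.Finite.mem_toFinset] at hp
    obtain ⟨c1, c2, c3, c4, c5, _, d2, _, _, _, _, e3, _⟩ := hp
    exact ⟨c1, c2, c3, c4, c5, d2, e3⟩
  -- maximal pairwise-disjoint subfamily
  obtain ⟨M, hM, hMmax⟩ := Finset.exists_max_image
      (F.powerset.filter (fun S : Finset (Fin n × Fin n) =>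
        ∀ e ∈ S, ∀ f ∈ S, e ≠ f → e.1 ≠ f.1 ∧ e.1 ≠ f.2 ∧ e.2 ≠ f.1 ∧ e.2 ≠ f.2))
      Finset.card
      ⟨∅, by simp⟩
  rw [Finset.mem_filter, Finset.mem_powerset] at hM
  obtain ⟨hMF, hMdis⟩ := hM
  have hMcard : M.card < 4 * l := by
    by_contra hcon
    push_neg at hcon
    refine hnotrich ⟨hab.ne, h1, h2, h3, h4, hab'.ne, hab, hab', M, hcon, hMdis, ?_⟩
    intro e he
    obtain ⟨c1, c2, c3, c4, c5, _, _⟩ := hFmem e (hMF he)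
    exact ⟨c1, c2, c3, c4, c5⟩
  -- every middle edge meets M
  have hconf : ∀ p ∈ F, ∃ m ∈ M, p.1 = m.1 ∨ p.1 = m.2 ∨ p.2 = m.1 ∨ p.2 = m.2 := by
    intro p hp
    by_contra hcon
    push_neg at hcon
    have hpM : p ∉ M := fun hpM => (hcon p hpM).1 rfl
    have hins : insert p M ∈ F.powerset.filter (fun S : Finset (Fin n × Fin n) =>
        ∀ e ∈ S, ∀ f ∈ S, e ≠ f → e.1 ≠ f.1 ∧ e.1 ≠ f.2 ∧ e.2 ≠ f.1 ∧ e.2 ≠ f.2) := by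
      rw [Finset.mem_filter, Finset.mem_powerset]
      refine ⟨Finset.insert_subset hp hMF, ?_⟩
      intro e he f hf hef
      rcases Finset.mem_insert.mp he with rfl | heM
      · rcases Finset.mem_insert.mp hf with rfl | hfM
        · exact absurd rfl hef
        · exact hcon f hfM
      · rcases Finset.mem_insert.mp hf with rfl | hfM
        · obtain ⟨u1, u2, u3, u4⟩ := hcon e heM
          exact ⟨u1.symm, u3.symm, u2.symm, u4.symm⟩
        · exact hMdis e heM f hfM hef
    have := hMmax _ hins
    rw [Finset.card_insert_of_notMem hpM] at this
    omega
  have hconf' : ∀ p : Fin n × Fin n, ∃ m, p ∈ F →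
      m ∈ M ∧ (p.1 = m.1 ∨ p.1 = m.2 ∨ p.2 = m.1 ∨ p.2 = m.2) := by
    intro p
    by_cases hp : p ∈ F
    · obtain ⟨m, hm, hc⟩ := hconf p hp
      exact ⟨m, fun _ => ⟨hm, hc⟩⟩
    · exact ⟨(a, b), fun h => absurd h hp⟩
  choose g hg using hconf'
  have hsplit : ∑ p ∈ F, wfun G a b' D p
      = ∑ m ∈ M, ∑ p ∈ F.filter (fun p => g p = m), wfun G a b' D p :=
    (Finset.sum_fiberwise_of_maps_to (fun p hp => (hg p hp).1) _).symm
  have hunion : ∀ s t : Finset (Fin n × Fin n),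
      ∑ p ∈ s ∪ t, wfun G a b' D p ≤ ∑ p ∈ s, wfun G a b' D p + ∑ p ∈ t, wfun G a b' D p := by
    intro s t
    have h := Finset.sum_union_inter (s₁ := s) (s₂ := t) (f := wfun G a b' D)
    have h2 : 0 ≤ ∑ p ∈ s ∩ t, wfun G a b' D p :=
      Finset.sum_nonneg fun p _ => wfun_nonneg G a b' hD0 p
    linarith
  have hinner : ∀ m ∈ M, ∑ p ∈ F.filter (fun p => g p = m), wfun G a b' D p ≤ 2 := by
    intro m hm
    have hsub : F.filter (fun p => g p = m) ⊆
        (F.filter (fun p => p.1 = m.1) ∪ F.filter (fun p => p.1 = m.2)) ∪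
        (F.filter (fun p => p.2 = m.1) ∪ F.filter (fun p => p.2 = m.2)) := by
      intro p hp
      obtain ⟨hpF, hpg⟩ := Finset.mem_filter.mp hp
      obtain ⟨-, hc⟩ := hg p hpF
      rw [hpg] at hc
      simp only [Finset.mem_union, Finset.mem_filter]
      tauto
    have hstep : ∑ p ∈ F.filter (fun p => g p = m), wfun G a b' D p ≤
        ∑ p ∈ (F.filter (fun p => p.1 = m.1) ∪ F.filter (fun p => p.1 = m.2)) ∪
          (F.filter (fun p => p.2 = m.1) ∪ F.filter (fun p => p.2 = m.2)), wfun G a b' D p :=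
      Finset.sum_le_sum_of_subset_of_nonneg hsub fun p _ _ => wfun_nonneg G a b' hD0 p
    have hA1 := roleA_aux G hD0 hab hab' F hFmem m.1
    have hA2 := roleA_aux G hD0 hab hab' F hFmem m.2
    have hB1 := roleB_aux G hD0 hab hab' F hFmem m.1
    have hB2 := roleB_aux G hD0 hab hab' F hFmem m.2
    have hu1 := hunion (F.filter (fun p => p.1 = m.1)) (F.filter (fun p => p.1 = m.2))
    have hu2 := hunion (F.filter (fun p => p.2 = m.1)) (F.filter (fun p => p.2 = m.2))
    have hu3 := hunion ((F.filter (fun p => p.1 = m.1)) ∪ (F.filter (fun p => p.1 = m.2)))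
      ((F.filter (fun p => p.2 = m.1)) ∪ (F.filter (fun p => p.2 = m.2)))
    linarith
  rw [hsplit]
  have hfinal : ∑ m ∈ M, ∑ p ∈ F.filter (fun p => g p = m), wfun G a b' D p
      ≤ ∑ m ∈ M, (2 : ℝ) := Finset.sum_le_sum hinner
  rw [Finset.sum_const, nsmul_eq_mul] at hfinal
  have hMl : (M.card : ℝ) + 1 ≤ 4 * l := by exact_mod_cast hMcard
  have hl0 : (0 : ℝ) ≤ (l : ℕ) := Nat.cast_nonneg l
  linarith
end
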